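/- arXiv:1507.01143 — 3 statements merged into one kernel-verified Lean document; each statement's English description precedes it below -/
import Mathlib

section
/- Let c > 0, let G : [s₀,s₁] → ℝ be continuously differentiable with sup |G| ≤ 1/3, and let k be an integrable function on [s₀,s₁]. Let z : [s₀,s₁] → ℝ be a C² solution of z''(λ) + (c²/(1+G(λ))) z(λ) = k(λ) with z(s₀) = z₀ and z'(s₀) = z₁. Set K(s) := ∫_{s₀}^s |k(s̄)| ds̄. Then there is a constant C > 0, depending only on c, such that for all s ∈ [s₀,s₁]: |z(s)| + |z'(s)| ≤ C [ (|z₀| + |z₁| + K(s)) + ∫_{s₀}^s (|z₀| + |z₁| + K(s̄)) |G'(s̄)| exp(C ∫_{s̄}^s |G'(λ)| dλ) ds̄ ]. -/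
noncomputable section
set_option maxHeartbeats 1600000
open MeasureTheory intervalIntegral Set

lemma abs_pair_le_aux (mu mm Fv Ev zv wv : ℝ) (hmu : 0 < mu) (hm2 : mm^2 = 2/mu)
    (hmnn : 0 ≤ mm) (hFnn : 0 ≤ Fv)
    (h1 : mu * (zv^2 + wv^2) ≤ Ev) (hEF : Ev ≤ Fv^2) :
    |zv| + |wv| ≤ mm * Fv := by
  have h3 : mu * (|zv| + |wv|)^2 ≤ 2 * Ev := by
    nlinarith [sq_nonneg (|zv| - |wv|), sq_abs zv, sq_abs wv]
  have h4 : (|zv| + |wv|)^2 ≤ (mm * Fv)^2 := by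
    rw [mul_pow, hm2, div_mul_eq_mul_div, le_div_iff₀ hmu]
    nlinarith
  have h6 := Real.sqrt_le_sqrt h4
  rwa [Real.sqrt_sq (by positivity), Real.sqrt_sq (mul_nonneg hmnn hFnn)] at h6

/-- Grönwall-type lemma in integral form with variable coefficient. -/
lemma gronwall_var (p s : ℝ) (hps : p ≤ s) (b F A : ℝ → ℝ)
    (hb : Continuous b) (hbnn : ∀ t, 0 ≤ b t) (hF : Continuous F)
    (hA : ContinuousOn A (Set.Icc p s))
    (hIG : ∀ t ∈ Set.Icc p s, F t ≤ A t + ∫ r in p..t, 2 * b r * F r) :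
    F s ≤ A s + ∫ r in p..s, 2 * b r * A r * Real.exp (2 * ∫ x in r..s, b x) := by
  set B : ℝ → ℝ := fun r => ∫ x in p..r, b x with hBdef
  have hB : ∀ x : ℝ, HasDerivAt B (b x) x := fun x => (hb.integral_hasStrictDerivAt p x).hasDerivAt
  have hBc : Continuous B := by
    rw [continuous_iff_continuousAt]; exact fun x => (hB x).continuousAt
  have hEc : Continuous fun t => Real.exp (-(2 * B t)) :=
    ((continuous_const.mul hBc).neg).rexp
  have hEd : ∀ x : ℝ, HasDerivAt (fun t => Real.exp (-(2 * B t)))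
      (Real.exp (-(2 * B x)) * (-(2 * b x))) x := fun x =>
    (((hB x).const_mul 2).neg).exp
  have hbF : Continuous fun r => 2 * b r * F r := (continuous_const.mul hb).mul hF
  set v : ℝ → ℝ := fun t => ∫ r in p..t, 2 * b r * F r with hvdef
  have hv : ∀ x : ℝ, HasDerivAt v (2 * b x * F x) x := fun x =>
    (hbF.integral_hasStrictDerivAt p x).hasDerivAt
  have hvc : Continuous v := by
    rw [continuous_iff_continuousAt]; exact fun x => (hv x).continuousAt
  set g : ℝ → ℝ := fun r => 2 * b r * A r * Real.exp (-(2 * B r)) with hgdef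
  have hgC : ContinuousOn g (Set.Icc p s) :=
    (((continuous_const.mul hb).continuousOn.mul hA).mul hEc.continuousOn)
  have hgInt : ∀ x ∈ Set.Icc p s, IntervalIntegrable g volume p x := by
    intro x hx
    apply ContinuousOn.intervalIntegrable
    apply hgC.mono
    rw [uIcc_of_le hx.1]
    exact Icc_subset_Icc le_rfl hx.2
  set ψ : ℝ → ℝ := fun t => ∫ r in p..t, g r with hψdef
  have hψc : ContinuousOn ψ (Set.Icc p s) := by
    have := intervalIntegral.continuousOn_primitive_interval
      (f := g) (μ := volume) (a := p) (b := s) ?_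
    · rwa [uIcc_of_le hps] at this
    · rw [uIcc_of_le hps]; exact hgC.integrableOn_Icc
  have hψd : ∀ x ∈ Set.Ioo p s, HasDerivAt ψ (g x) x := by
    intro x hx
    have hmem : Set.Icc p s ∈ nhds x := Icc_mem_nhds hx.1 hx.2
    exact integral_hasDerivAt_right (hgInt x (Ioo_subset_Icc_self hx))
      ⟨Set.Icc p s, hmem, hgC.aestronglyMeasurable measurableSet_Icc⟩
      (hgC.continuousAt hmem)
  set φ : ℝ → ℝ := fun t => v t * Real.exp (-(2 * B t)) - ψ t with hφdef
  have hφc : ContinuousOn φ (Set.Icc p s) :=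
    ((hvc.mul hEc).continuousOn).sub hψc
  have hφd : ∀ x ∈ Set.Ioo p s, HasDerivAt φ
      (2 * b x * Real.exp (-(2 * B x)) * (F x - v x - A x)) x := by
    intro x hx
    have h1 := ((hv x).mul (hEd x)).sub (hψd x hx)
    refine h1.congr_deriv ?_
    simp only [hgdef]
    ring
  have hanti : AntitoneOn φ (Set.Icc p s) := by
    apply antitoneOn_of_deriv_nonpos (convex_Icc p s) hφc
    · intro x hx
      rw [interior_Icc] at hx
      exact ((hφd x hx).differentiableAt).differentiableWithinAt
    · intro x hx
      rw [interior_Icc] at hx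
      rw [(hφd x hx).deriv]
      have hFvA : F x - v x - A x ≤ 0 := by
        have := hIG x (Ioo_subset_Icc_self hx)
        simp only [hvdef]
        linarith
      have : 0 ≤ 2 * b x * Real.exp (-(2 * B x)) := by
        have := hbnn x; positivity
      exact mul_nonpos_of_nonneg_of_nonpos this hFvA
  have hφs : φ s ≤ φ p :=
    hanti (left_mem_Icc.mpr hps) (right_mem_Icc.mpr hps) hps
  have hφp : φ p = 0 := by
    simp only [hφdef, hvdef, hψdef, intervalIntegral.integral_same, zero_mul, sub_zero, sub_self]
  have hvs : v s * Real.exp (-(2 * B s)) ≤ ψ s := by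
    have := hφs; rw [hφp] at this; simp only [hφdef] at this; linarith
  have hvs' : v s ≤ Real.exp (2 * B s) * ψ s := by
    have h2 := mul_le_mul_of_nonneg_left hvs (Real.exp_pos (2 * B s)).le
    calc v s = Real.exp (2 * B s) * (v s * Real.exp (-(2 * B s))) := by
            rw [mul_comm (v s), ← mul_assoc, ← Real.exp_add]
            simp
      _ ≤ Real.exp (2 * B s) * ψ s := h2
  have hψeq : Real.exp (2 * B s) * ψ s
      = ∫ r in p..s, 2 * b r * A r * Real.exp (2 * ∫ x in r..s, b x) := by
    rw [hψdef]
    rw [← intervalIntegral.integral_const_mul]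
    apply intervalIntegral.integral_congr
    intro r _
    simp only [hgdef]
    have hBsub : B s - B r = ∫ x in r..s, b x :=
      integral_interval_sub_left (hb.intervalIntegrable p s) (hb.intervalIntegrable p r)
    rw [← hBsub]
    rw [show Real.exp (2 * (B s - B r)) = Real.exp (2 * B s) * Real.exp (-(2 * B r)) by
      rw [← Real.exp_add]; ring_nf]
    ring
  calc F s ≤ A s + v s := hIG s (right_mem_Icc.mpr hps)
    _ ≤ A s + Real.exp (2 * B s) * ψ s := by linarith
    _ = _ := by rw [hψeq]

/-- Lemma 3.4: uniform bound for solutions of the ODE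
`z'' + (c²/(1+G)) z = k` on `[s₀,s₁]` when `sup |G| ≤ 1/3`. -/
theorem ode_estimate_KleinGordon :
    ∀ c : ℝ, 0 < c →
      ∃ C : ℝ, 0 < C ∧
        ∀ (s₀ s₁ : ℝ), s₀ ≤ s₁ →
          ∀ (G k z : ℝ → ℝ) (z₀ z₁ : ℝ),
            ContDiffOn ℝ 1 G (Set.Icc s₀ s₁) →
            (∀ lam ∈ Set.Icc s₀ s₁, |G lam| ≤ 1/3) →
            IntervalIntegrable k MeasureTheory.volume s₀ s₁ →
            ContDiff ℝ 2 z →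
            (∀ lam ∈ Set.Icc s₀ s₁,
              deriv (deriv z) lam + (c^2 / (1 + G lam)) * z lam = k lam) →
            z s₀ = z₀ → deriv z s₀ = z₁ →
            ∀ s ∈ Set.Icc s₀ s₁,
              |z s| + |deriv z s|
                ≤ C * ((|z₀| + |z₁| + ∫ t in s₀..s, |k t|)
                    + ∫ t in s₀..s,
                        (|z₀| + |z₁| + ∫ r in s₀..t, |k r|) * |deriv G t|
                          * Real.exp (C * ∫ r in t..s, |deriv G r|)) := by
  intro c hc
  have hc2 : (0:ℝ) < c ^ 2 := by positivity
  set μ : ℝ := min (3 / 4 * c ^ 2) 1 with hμdef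
  have hμ : 0 < μ := lt_min (by positivity) one_pos
  have hμ1 : μ ≤ 1 := min_le_right _ _
  have hμc : μ ≤ 3 / 4 * c ^ 2 := min_le_left _ _
  set m : ℝ := Real.sqrt (2 / μ) with hmdef
  have hm : 0 < m := Real.sqrt_pos.mpr (by positivity)
  have hm2 : m ^ 2 = 2 / μ := by
    rw [hmdef]
    exact Real.sq_sqrt (by positivity)
  set n : ℝ := Real.sqrt (max (3 / 2 * c ^ 2) 1) with hndef
  have hn1 : 1 ≤ n := by
    have h1 : Real.sqrt 1 ≤ n := by
      rw [hndef]
      exact Real.sqrt_le_sqrt (le_max_right _ _)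
    rwa [Real.sqrt_one] at h1
  set C : ℝ := 2 * (m + 1) * (n + 1) + 2 with hCdef
  have hC2 : 2 ≤ C := by nlinarith
  have hCmn : 2 * m * n ≤ C := by nlinarith
  have hCmn1 : m * n ≤ C := by nlinarith
  have hCpos : (0:ℝ) < C := by linarith
  clear_value μ m n C
  refine ⟨C, hCpos, ?_⟩
  intro s₀ s₁ hle G k z z₀ z₁ hG hGle hk hz hODE hz0 hz1 s hs
  rcases eq_or_lt_of_le hle with heq | h01
  · -- degenerate case s₀ = s₁
    have hss : s = s₀ := le_antisymm (heq ▸ hs.2) hs.1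
    subst hss
    rw [hz0, hz1]
    simp only [intervalIntegral.integral_same]
    have h0 : (0:ℝ) ≤ |z₀| + |z₁| := by positivity
    nlinarith
  -- main case
  have hs₀s : s₀ ≤ s := hs.1
  have hss₁ : s ≤ s₁ := hs.2
  have hUD : UniqueDiffOn ℝ (Set.Icc s₀ s₁) := uniqueDiffOn_Icc h01
  have hGc : ContinuousOn G (Set.Icc s₀ s₁) := hG.continuousOn
  have hdw : ContinuousOn (derivWithin G (Set.Icc s₀ s₁)) (Set.Icc s₀ s₁) :=
    hG.continuousOn_derivWithin hUD le_rfl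
  set dG : ℝ → ℝ := Set.IccExtend hle ((Set.Icc s₀ s₁).restrict (derivWithin G (Set.Icc s₀ s₁)))
    with hdGdef
  have hdGc : Continuous dG := (hdw.restrict).Icc_extend'
  have hdGeq : ∀ t ∈ Set.Icc s₀ s₁, dG t = derivWithin G (Set.Icc s₀ s₁) t := by
    intro t ht
    rw [hdGdef, Set.IccExtend_of_mem hle _ ht]
    rfl
  have hGd : ∀ x ∈ Set.Ioo s₀ s₁, HasDerivAt G (dG x) x := by
    intro x hx
    have h1 : HasDerivWithinAt G (derivWithin G (Set.Icc s₀ s₁) x) (Set.Icc s₀ s₁) x :=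
      ((hG.differentiableOn one_ne_zero) x (Set.Ioo_subset_Icc_self hx)).hasDerivWithinAt
    rw [hdGeq x (Set.Ioo_subset_Icc_self hx)]
    exact h1.hasDerivAt (Icc_mem_nhds hx.1 hx.2)
  have hdG_deriv : ∀ x ∈ Set.Ioo s₀ s₁, deriv G x = dG x := fun x hx => (hGd x hx).deriv
  set b : ℝ → ℝ := fun t => |dG t| with hbdef
  have hbc : Continuous b := hdGc.abs
  have hbnn : ∀ t, 0 ≤ b t := fun t => abs_nonneg _
  clear_value dG
  -- bounds on 1 + G
  have h1G : ∀ t ∈ Set.Icc s₀ s₁, 2/3 ≤ 1 + G t ∧ 1 + G t ≤ 4/3 := by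
    intro t ht
    have h1 := abs_le.mp (hGle t ht)
    exact ⟨by linarith [h1.1], by linarith [h1.2]⟩
  have h1Gpos : ∀ t ∈ Set.Icc s₀ s₁, (0:ℝ) < 1 + G t := fun t ht =>
    lt_of_lt_of_le (by norm_num) (h1G t ht).1
  have h1Gne : ∀ t ∈ Set.Icc s₀ s₁, 1 + G t ≠ 0 := fun t ht => ne_of_gt (h1Gpos t ht)
  have hqlb : ∀ t ∈ Set.Icc s₀ s₁, 3/4 * c^2 ≤ c^2 / (1 + G t) := by
    intro t ht
    rw [le_div_iff₀ (h1Gpos t ht)]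
    nlinarith [(h1G t ht).2]
  have hqub : ∀ t ∈ Set.Icc s₀ s₁, c^2 / (1 + G t) ≤ 3/2 * c^2 := by
    intro t ht
    rw [div_le_iff₀ (h1Gpos t ht)]
    nlinarith [(h1G t ht).1]
  -- smoothness of z
  have hzdiff : Differentiable ℝ z := hz.differentiable (by norm_num)
  have hz'c : Continuous (deriv z) := hz.continuous_deriv (by norm_num)
  have hz'C1 : ContDiff ℝ 1 (deriv z) := by
    have h21 : ContDiff ℝ (1 + 1 : WithTop ℕ∞) z := by
      have he : (1 + 1 : WithTop ℕ∞) = 2 := by norm_num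
      rw [he]
      exact hz
    exact (contDiff_succ_iff_deriv.mp h21).2.2
  have hz'diff : Differentiable ℝ (deriv z) := hz'C1.differentiable one_ne_zero
  -- energy
  set E : ℝ → ℝ := fun t => c^2 / (1 + G t) * z t ^ 2 + deriv z t ^ 2 with hEdef
  have hEc : ContinuousOn E (Set.Icc s₀ s₁) :=
    ((continuousOn_const.div (continuousOn_const.add hGc) h1Gne).mul
      ((hzdiff.continuous.pow 2).continuousOn)).add ((hz'c.pow 2).continuousOn)
  have hEnn : ∀ t ∈ Set.Icc s₀ s₁, 0 ≤ E t := by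
    intro t ht
    have h1 := hqlb t ht
    have h2 : 0 ≤ c^2 / (1 + G t) := le_trans (by positivity) h1
    simp only [hEdef]
    positivity
  set Ec : ℝ → ℝ := Set.IccExtend hle ((Set.Icc s₀ s₁).restrict E) with hEcdef
  have hEcc : Continuous Ec := (hEc.restrict).Icc_extend'
  have hEceq : ∀ t ∈ Set.Icc s₀ s₁, Ec t = E t := by
    intro t ht
    rw [hEcdef, Set.IccExtend_of_mem hle _ ht]
    rfl
  have hEcnn : ∀ t, 0 ≤ Ec t := by
    intro t
    rw [hEcdef]
    exact hEnn _ (Set.projIcc s₀ s₁ hle t).2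
  clear_value Ec
  -- primitive of |k|
  set K : ℝ → ℝ := fun t => ∫ x in s₀..t, |k x| with hKdef
  have hkabs : IntervalIntegrable (fun x => |k x|) volume s₀ s₁ := hk.abs
  have hKc : ContinuousOn K (Set.Icc s₀ s₁) := by
    have h1 : IntegrableOn (fun x => |k x|) (Set.uIcc s₀ s₁) volume := by
      rw [Set.uIcc_of_le hle]
      exact (intervalIntegrable_iff_integrableOn_Icc_of_le hle).mp hkabs
    have := intervalIntegral.continuousOn_primitive_interval (μ := volume) h1
    rwa [Set.uIcc_of_le hle] at this
  have hKnn : ∀ t ∈ Set.Icc s₀ s₁, 0 ≤ K t := fun t ht =>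
    intervalIntegral.integral_nonneg ht.1 (fun x _ => abs_nonneg _)
  set aa : ℝ → ℝ := fun t => |z₀| + |z₁| + K t with haadef
  have haac : ContinuousOn aa (Set.Icc s₀ s₁) := continuousOn_const.add hKc
  have haann : ∀ t ∈ Set.Icc s₀ s₁, 0 ≤ aa t := by
    intro t ht
    have := hKnn t ht
    simp only [haadef]
    positivity
  -- the weight W t = ∫_t^s b
  set W : ℝ → ℝ := fun t => ∫ r in t..s, b r with hWdef
  have hWc : Continuous W := by
    have h1 : Continuous fun t => ∫ r in s..t, b r :=
      intervalIntegral.continuous_primitive (fun a b => hbc.intervalIntegrable a b) s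
    have h2 : W = fun t => -∫ r in s..t, b r := by
      funext t
      rw [hWdef]
      exact intervalIntegral.integral_symm s t
    rw [h2]
    exact h1.neg
  have hWnn : ∀ t ∈ Set.Icc s₀ s, 0 ≤ W t := fun t ht =>
    intervalIntegral.integral_nonneg ht.2 (fun x _ => hbnn x)
  -- a.e. avoidance of single points
  have hae : ∀ a : ℝ, ∀ᵐ x ∂(volume : Measure ℝ), x ≠ a := by
    intro a
    rw [MeasureTheory.ae_iff]
    simp only [ne_eq, not_not, Set.setOf_eq_eq_singleton]
    exact Real.volume_singleton
  -- main estimate with ε-regularized energy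
  have key : ∀ ε : ℝ, 0 < ε →
      |z s| + |deriv z s|
        ≤ C * (aa s + ∫ t in s₀..s, aa t * b t * Real.exp (C * W t))
          + ε * (m * (1 + ∫ t in s₀..s, 2 * b t * Real.exp (2 * W t))) := by
    intro ε hε
    set F : ℝ → ℝ := fun t => Real.sqrt (Ec t + ε ^ 2) with hFdef
    have hFc : Continuous F := (hEcc.add continuous_const).sqrt
    have hFpos : ∀ t, 0 < F t := by
      intro t
      apply Real.sqrt_pos.mpr
      have := hEcnn t
      positivity
    have hFsq : ∀ t, F t ^ 2 = Ec t + ε ^ 2 := by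
      intro t
      rw [hFdef]
      exact Real.sq_sqrt (by have := hEcnn t; positivity)
    have hEF : ∀ t ∈ Set.Icc s₀ s₁, E t ≤ F t ^ 2 := by
      intro t ht
      rw [hFsq, hEceq t ht]
      nlinarith
    -- derivative of the energy
    set DE : ℝ → ℝ := fun x => c^2 * (-(dG x) / (1 + G x)^2) * z x ^ 2 + 2 * deriv z x * k x
      with hDEdef
    set DF : ℝ → ℝ := fun x => DE x / (2 * F x) with hDFdef
    have hFd : ∀ x ∈ Set.Ioo s₀ s₁, HasDerivAt F (DF x) x := by
      intro x hx
      have hxS : x ∈ Set.Icc s₀ s₁ := Set.Ioo_subset_Icc_self hx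
      have hne : 1 + G x ≠ 0 := h1Gne x hxS
      have h1 : HasDerivAt (fun t => 1 + G t) (dG x) x := (hGd x hx).const_add 1
      have hinv : HasDerivAt (fun t => (1 + G t)⁻¹) (-(dG x) / (1 + G x)^2) x := h1.inv hne
      have hq : HasDerivAt (fun t => c^2 * (1 + G t)⁻¹) (c^2 * (-(dG x) / (1 + G x)^2)) x :=
        hinv.const_mul (c^2)
      have hzx : HasDerivAt z (deriv z x) x := (hzdiff x).hasDerivAt
      have hz2 : HasDerivAt (fun t => z t ^ 2) (2 * z x ^ 1 * deriv z x) x := hzx.pow 2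
      have hz'x : HasDerivAt (deriv z) (deriv (deriv z) x) x := (hz'diff x).hasDerivAt
      have hz'2 : HasDerivAt (fun t => deriv z t ^ 2) (2 * deriv z x ^ 1 * deriv (deriv z) x) x :=
        hz'x.pow 2
      have hEq : HasDerivAt (fun t => c^2 * (1 + G t)⁻¹ * z t ^ 2 + deriv z t ^ 2)
          ((c^2 * (-(dG x) / (1 + G x)^2)) * z x ^ 2
            + (c^2 * (1 + G x)⁻¹) * (2 * z x ^ 1 * deriv z x)
            + 2 * deriv z x ^ 1 * deriv (deriv z) x) x := (hq.mul hz2).add hz'2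
      have hEq2 : HasDerivAt E (DE x) x := by
        have heq : E = fun t => c^2 * (1 + G t)⁻¹ * z t ^ 2 + deriv z t ^ 2 := by
          funext t
          simp only [hEdef, div_eq_mul_inv]
        rw [heq]
        convert hEq using 1
        have hODEx := hODE x hxS
        simp only [pow_one, hDEdef]
        linear_combination (-(2 * deriv z x)) * hODEx
      have hEcd : HasDerivAt Ec (DE x) x :=
        hEq2.congr_of_eventuallyEq
          (Filter.eventuallyEq_of_mem (Icc_mem_nhds hx.1 hx.2) hEceq)
      have h0 : Ec x + ε ^ 2 ≠ 0 := by have := hEcnn x; positivity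
      have hres := (hEcd.add_const (ε ^ 2)).sqrt h0
      exact hres
    clear_value F DE DF
    -- pointwise bound on the derivative
    have hDFle : ∀ x ∈ Set.Ioo s₀ s₁, DF x ≤ 2 * b x * F x + |k x| := by
      intro x hx
      have hxS : x ∈ Set.Icc s₀ s₁ := Set.Ioo_subset_Icc_self hx
      have hF := hFpos x
      have hEx : E x ≤ F x ^ 2 := hEF x hxS
      have hqlbx := hqlb x hxS
      have hz2le : 3/4 * c^2 * z x ^ 2 ≤ E x := by
        simp only [hEdef]
        nlinarith [sq_nonneg (z x), sq_nonneg (deriv z x)]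
      have hz'le : deriv z x ^ 2 ≤ E x := by
        simp only [hEdef]
        nlinarith [sq_nonneg (z x)]
      have hzabs : |deriv z x| ≤ F x := by
        nlinarith [abs_nonneg (deriv z x), sq_abs (deriv z x), hF]
      have hG1 := (h1G x hxS).1
      have hG2 := (h1G x hxS).2
      have hGsqpos : (0:ℝ) < (1 + G x)^2 := by nlinarith
      have hb0 := hbnn x
      have hDE : DE x ≤ 3 * b x * F x ^ 2 + 2 * F x * |k x| := by
        have hterm1 : c^2 * (-(dG x) / (1 + G x)^2) * z x ^ 2
            ≤ 3 * b x * F x ^ 2 := by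
          have hd : -(dG x) ≤ b x := by
            simp only [hbdef]
            exact neg_le_abs _
          have h49 : 4/9 ≤ (1 + G x)^2 := by nlinarith [hG1]
          have hstep : -(dG x) / (1 + G x)^2 ≤ b x * (9/4) := by
            rw [div_le_iff₀ hGsqpos]
            have h49' := mul_le_mul_of_nonneg_left h49 hb0
            nlinarith [hd, hb0, h49']
          have h34 : c^2 * (-(dG x) / (1 + G x)^2) * z x ^ 2
              ≤ c^2 * (b x * (9/4)) * z x ^ 2 :=
            mul_le_mul_of_nonneg_right
              (mul_le_mul_of_nonneg_left hstep hc2.le) (sq_nonneg (z x))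
          have h5' := mul_le_mul_of_nonneg_left hz2le
            (mul_nonneg (by norm_num : (0:ℝ) ≤ 3) hb0)
          have h6' := mul_le_mul_of_nonneg_left hEx
            (mul_nonneg (by norm_num : (0:ℝ) ≤ 3) hb0)
          calc c^2 * (-(dG x) / (1 + G x)^2) * z x ^ 2
              ≤ c^2 * (b x * (9/4)) * z x ^ 2 := h34
            _ = 3 * b x * (3/4 * c^2 * z x ^ 2) := by ring
            _ ≤ 3 * b x * E x := h5'
            _ ≤ 3 * b x * F x ^ 2 := h6'
        have hterm2 : 2 * deriv z x * k x ≤ 2 * F x * |k x| := by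
          calc 2 * deriv z x * k x ≤ |2 * deriv z x * k x| := le_abs_self _
            _ = 2 * |deriv z x| * |k x| := by
                rw [abs_mul, abs_mul]
                norm_num
            _ ≤ 2 * F x * |k x| := by nlinarith [abs_nonneg (k x)]
        simp only [hDEdef]
        linarith
      rw [hDFdef]
      rw [div_le_iff₀ (by positivity : (0:ℝ) < 2 * F x)]
      nlinarith [hDE, mul_nonneg hb0 (sq_nonneg (F x)), abs_nonneg (k x)]
    -- interval integrability of DF
    have hsubS : Set.uIcc s₀ s ⊆ Set.Icc s₀ s₁ := by
      rw [Set.uIcc_of_le hs₀s]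
      exact Set.Icc_subset_Icc le_rfl hss₁
    have hDFint : IntervalIntegrable DF volume s₀ s := by
      have hg1c : ContinuousOn (fun x => c^2 * (-(dG x) / (1 + G x)^2) * z x ^ 2 / (2 * F x))
          (Set.Icc s₀ s₁) := by
        apply ContinuousOn.div
        · exact ((continuousOn_const.mul ((hdGc.neg.continuousOn).div
            ((continuousOn_const.add hGc).pow 2)
            (fun t ht => pow_ne_zero 2 (h1Gne t ht)))).mul
            ((hzdiff.continuous.pow 2).continuousOn))
        · exact (continuous_const.mul hFc).continuousOn
        · intro t _
          have := hFpos t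
          positivity
      have hg2c : ContinuousOn (fun x => deriv z x / F x) (Set.uIcc s₀ s) :=
        (hz'c.continuousOn).div hFc.continuousOn (fun t _ => ne_of_gt (hFpos t))
      have hkint : IntervalIntegrable k volume s₀ s := by
        apply hk.mono_set
        rw [Set.uIcc_of_le hs₀s, Set.uIcc_of_le hle]
        exact Set.Icc_subset_Icc le_rfl hss₁
      have h12 := ((hg1c.mono hsubS).intervalIntegrable).add (hkint.mul_continuousOn hg2c)
      have hfun : DF = fun x => c^2 * (-(dG x) / (1 + G x)^2) * z x ^ 2 / (2 * F x)
          + k x * (deriv z x / F x) := by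
        funext x
        have hFx : F x ≠ 0 := (hFpos x).ne'
        simp only [hDFdef, hDEdef]
        rw [add_div]
        congr 1
        field_simp
      rw [hfun]
      exact h12
    -- integral inequality for F
    have hIG : ∀ t ∈ Set.Icc s₀ s, F t ≤ (F s₀ + K t) + ∫ r in s₀..t, 2 * b r * F r := by
      intro t ht
      have ht0 : s₀ ≤ t := ht.1
      have hts₁ : t ≤ s₁ := le_trans ht.2 hss₁
      have hFTC : ∫ x in s₀..t, DF x = F t - F s₀ := by
        apply intervalIntegral.integral_eq_sub_of_hasDerivAt_of_le ht0 hFc.continuousOn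
        · intro x hx
          exact hFd x ⟨hx.1, lt_of_lt_of_le hx.2 hts₁⟩
        · apply hDFint.mono_set
          rw [Set.uIcc_of_le ht0, Set.uIcc_of_le hs₀s]
          exact Set.Icc_subset_Icc le_rfl ht.2
      have hint1 : IntervalIntegrable (fun r => 2 * b r * F r) volume s₀ t :=
        ((continuous_const.mul hbc).mul hFc).intervalIntegrable _ _
      have hint2 : IntervalIntegrable (fun x => |k x|) volume s₀ t := by
        apply hkabs.mono_set
        rw [Set.uIcc_of_le ht0, Set.uIcc_of_le hle]
        exact Set.Icc_subset_Icc le_rfl hts₁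
      have hDFt : IntervalIntegrable DF volume s₀ t := by
        apply hDFint.mono_set
        rw [Set.uIcc_of_le ht0, Set.uIcc_of_le hs₀s]
        exact Set.Icc_subset_Icc le_rfl ht.2
      have hmono : ∫ x in s₀..t, DF x ≤ ∫ x in s₀..t, (2 * b x * F x + |k x|) := by
        apply intervalIntegral.integral_mono_ae_restrict ht0 hDFt (hint1.add hint2)
        refine (ae_restrict_iff' measurableSet_Icc).mpr ?_
        filter_upwards [hae s₀, hae s₁] with x hx0 hx1 hxm
        exact hDFle x ⟨lt_of_le_of_ne hxm.1 (Ne.symm hx0),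
          lt_of_le_of_ne (le_trans hxm.2 hts₁) hx1⟩
      have hsplit : ∫ x in s₀..t, (2 * b x * F x + |k x|)
          = (∫ x in s₀..t, 2 * b x * F x) + K t :=
        intervalIntegral.integral_add hint1 hint2
      have : F t - F s₀ ≤ (∫ x in s₀..t, 2 * b x * F x) + K t := by
        rw [← hFTC, ← hsplit]
        exact hmono
      linarith
    -- Grönwall
    have hgron := gronwall_var s₀ s hs₀s b F (fun t => F s₀ + K t) hbc hbnn hFc
      (continuousOn_const.add (hKc.mono (Set.Icc_subset_Icc le_rfl hss₁))) hIG
    -- initial-value bound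
    have hs₀S : s₀ ∈ Set.Icc s₀ s₁ := Set.left_mem_Icc.mpr hle
    have hFs₀ : F s₀ ≤ n * (|z₀| + |z₁|) + ε := by
      have hn2 : n ^ 2 = max (3/2 * c^2) 1 := by
        rw [hndef]
        exact Real.sq_sqrt (le_trans zero_le_one (le_max_right _ _))
      have h2 : 3/2 * c^2 ≤ n ^ 2 := hn2 ▸ le_max_left _ _
      have h3 : (1:ℝ) ≤ n ^ 2 := hn2 ▸ le_max_right _ _
      have hE0 : E s₀ ≤ (n * (|z₀| + |z₁|)) ^ 2 := by
        have h1 := hqub s₀ hs₀S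
        have h1' := hqlb s₀ hs₀S
        simp only [hEdef]
        rw [hz0, hz1]
        nlinarith [sq_abs z₀, sq_abs z₁, abs_nonneg z₀, abs_nonneg z₁, sq_nonneg z₀,
          sq_nonneg z₁, mul_nonneg (abs_nonneg z₀) (abs_nonneg z₁),
          mul_le_mul_of_nonneg_right h1 (sq_nonneg z₀)]
      have h4 : F s₀ ≤ Real.sqrt ((n * (|z₀| + |z₁|)) ^ 2 + ε ^ 2) := by
        rw [hFdef]
        apply Real.sqrt_le_sqrt
        rw [hEceq s₀ hs₀S]
        linarith
      have h5 : Real.sqrt ((n * (|z₀| + |z₁|)) ^ 2 + ε ^ 2)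
          ≤ n * (|z₀| + |z₁|) + ε := by
        have hnn : (0:ℝ) ≤ n * (|z₀| + |z₁|) := by positivity
        have h6 : (n * (|z₀| + |z₁|)) ^ 2 + ε ^ 2 ≤ (n * (|z₀| + |z₁|) + ε) ^ 2 := by
          nlinarith
        calc Real.sqrt ((n * (|z₀| + |z₁|)) ^ 2 + ε ^ 2)
            ≤ Real.sqrt ((n * (|z₀| + |z₁|) + ε) ^ 2) := Real.sqrt_le_sqrt h6
          _ = n * (|z₀| + |z₁|) + ε := Real.sqrt_sq (by positivity)
      linarith
    have hAle : ∀ t ∈ Set.Icc s₀ s, F s₀ + K t ≤ n * aa t + ε := by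
      intro t ht
      have hK := hKnn t ⟨ht.1, le_trans ht.2 hss₁⟩
      simp only [haadef]
      nlinarith [hn1, hK, hFs₀]
    -- the point s
    have hsS : s ∈ Set.Icc s₀ s₁ := hs
    -- |z| + |z'| ≤ m F
    have hmF : |z s| + |deriv z s| ≤ m * F s := by
      have h1 : μ * (z s ^ 2 + deriv z s ^ 2) ≤ E s := by
        have := hqlb s hsS
        simp only [hEdef]
        nlinarith [sq_nonneg (z s), sq_nonneg (deriv z s)]
      exact abs_pair_le_aux μ m (F s) (E s) (z s) (deriv z s) hμ hm2 hm.le (hFpos s).le h1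
        (hEF s hsS)
    -- continuity packs on [s₀,s]
    have haacs : ContinuousOn aa (Set.Icc s₀ s) :=
      haac.mono (Set.Icc_subset_Icc le_rfl hss₁)
    have hKcs : ContinuousOn K (Set.Icc s₀ s) := hKc.mono (Set.Icc_subset_Icc le_rfl hss₁)
    have hint_e2 : IntervalIntegrable (fun t => 2 * b t * Real.exp (2 * W t)) volume s₀ s :=
      ((continuous_const.mul hbc).mul ((continuous_const.mul hWc).rexp)).intervalIntegrable _ _
    have hint_gron : IntervalIntegrable
        (fun r => 2 * b r * (F s₀ + K r) * Real.exp (2 * W r)) volume s₀ s := by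
      apply ContinuousOn.intervalIntegrable
      rw [Set.uIcc_of_le hs₀s]
      exact (((continuous_const.mul hbc).continuousOn.mul
        (continuousOn_const.add hKcs)).mul ((continuous_const.mul hWc).rexp).continuousOn)
    have hint_naa : IntervalIntegrable
        (fun r => n * (2 * b r * aa r * Real.exp (2 * W r))
          + ε * (2 * b r * Real.exp (2 * W r))) volume s₀ s := by
      apply ContinuousOn.intervalIntegrable
      rw [Set.uIcc_of_le hs₀s]
      exact ((continuousOn_const.mul (((continuous_const.mul hbc).continuousOn.mul haacs).mul
        ((continuous_const.mul hWc).rexp).continuousOn)).add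
        (continuousOn_const.mul ((continuous_const.mul hbc).mul
          ((continuous_const.mul hWc).rexp)).continuousOn))
    have hint_baa2 : IntervalIntegrable
        (fun r => 2 * b r * aa r * Real.exp (2 * W r)) volume s₀ s := by
      apply ContinuousOn.intervalIntegrable
      rw [Set.uIcc_of_le hs₀s]
      exact (((continuous_const.mul hbc).continuousOn.mul haacs).mul
        ((continuous_const.mul hWc).rexp).continuousOn)
    have hint_target : IntervalIntegrable
        (fun t => aa t * b t * Real.exp (C * W t)) volume s₀ s := by
      apply ContinuousOn.intervalIntegrable
      rw [Set.uIcc_of_le hs₀s]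
      exact ((haacs.mul hbc.continuousOn).mul ((continuous_const.mul hWc).rexp).continuousOn)
    -- step 2: replace A by n·aa + ε inside the Grönwall integral
    have hstep2 : (∫ r in s₀..s, 2 * b r * (F s₀ + K r) * Real.exp (2 * W r))
        ≤ ∫ r in s₀..s, (n * (2 * b r * aa r * Real.exp (2 * W r))
            + ε * (2 * b r * Real.exp (2 * W r))) := by
      apply intervalIntegral.integral_mono_on hs₀s hint_gron hint_naa
      intro r hr
      have h6 := hAle r hr
      have h8 : (0:ℝ) ≤ 2 * b r * Real.exp (2 * W r) := by
        have := hbnn r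
        positivity
      have h9 : 2 * b r * (F s₀ + K r) * Real.exp (2 * W r)
          ≤ 2 * b r * (n * aa r + ε) * Real.exp (2 * W r) := by
        calc 2 * b r * (F s₀ + K r) * Real.exp (2 * W r)
            = (2 * b r * Real.exp (2 * W r)) * (F s₀ + K r) := by ring
          _ ≤ (2 * b r * Real.exp (2 * W r)) * (n * aa r + ε) :=
              mul_le_mul_of_nonneg_left h6 h8
          _ = 2 * b r * (n * aa r + ε) * Real.exp (2 * W r) := by ring
      calc 2 * b r * (F s₀ + K r) * Real.exp (2 * W r)
          ≤ 2 * b r * (n * aa r + ε) * Real.exp (2 * W r) := h9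
        _ = n * (2 * b r * aa r * Real.exp (2 * W r))
            + ε * (2 * b r * Real.exp (2 * W r)) := by ring
    have hsplit2 : (∫ r in s₀..s, (n * (2 * b r * aa r * Real.exp (2 * W r))
          + ε * (2 * b r * Real.exp (2 * W r))))
        = n * (∫ r in s₀..s, 2 * b r * aa r * Real.exp (2 * W r))
          + ε * (∫ r in s₀..s, 2 * b r * Real.exp (2 * W r)) := by
      rw [intervalIntegral.integral_add (hint_baa2.const_mul n) (hint_e2.const_mul ε),
        intervalIntegral.integral_const_mul, intervalIntegral.integral_const_mul]
    -- step 5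
    have hstep5 : m * n * (∫ r in s₀..s, 2 * b r * aa r * Real.exp (2 * W r))
        ≤ C * ∫ t in s₀..s, aa t * b t * Real.exp (C * W t) := by
      rw [← intervalIntegral.integral_const_mul, ← intervalIntegral.integral_const_mul]
      apply intervalIntegral.integral_mono_on hs₀s (hint_baa2.const_mul _)
        (hint_target.const_mul _)
      intro r hr
      have hW0 := hWnn r hr
      have haar := haann r ⟨hr.1, le_trans hr.2 hss₁⟩
      have hbr := hbnn r
      have hexp : Real.exp (2 * W r) ≤ Real.exp (C * W r) := by
        apply Real.exp_le_exp.mpr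
        nlinarith
      calc m * n * (2 * b r * aa r * Real.exp (2 * W r))
          = (2 * m * n) * (b r * aa r * Real.exp (2 * W r)) := by ring
        _ ≤ C * (b r * aa r * Real.exp (2 * W r)) := by
            apply mul_le_mul_of_nonneg_right hCmn
            positivity
        _ ≤ C * (b r * aa r * Real.exp (C * W r)) := by
            apply mul_le_mul_of_nonneg_left _ hCpos.le
            exact mul_le_mul_of_nonneg_left hexp (by positivity)
        _ = C * (aa r * b r * Real.exp (C * W r)) := by ring
    -- assemble
    have hgron' : F s ≤ (F s₀ + K s)
        + ∫ r in s₀..s, 2 * b r * (F s₀ + K r) * Real.exp (2 * W r) := hgron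
    have hA_s : F s₀ + K s ≤ n * aa s + ε := hAle s (Set.right_mem_Icc.mpr hs₀s)
    have haas := haann s hsS
    have hchain : m * F s ≤ C * (aa s + ∫ t in s₀..s, aa t * b t * Real.exp (C * W t))
        + ε * (m * (1 + ∫ t in s₀..s, 2 * b t * Real.exp (2 * W t))) := by
      have h10 : F s ≤ (n * aa s + ε)
          + (n * (∫ r in s₀..s, 2 * b r * aa r * Real.exp (2 * W r))
            + ε * (∫ r in s₀..s, 2 * b r * Real.exp (2 * W r))) := by
        rw [← hsplit2]
        linarith [hgron', hstep2, hA_s]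
      have h11 := mul_le_mul_of_nonneg_left h10 hm.le
      have h12 : m * n * aa s ≤ C * aa s := mul_le_mul_of_nonneg_right hCmn1 haas
      linarith [h11, h12, hstep5]
    linarith [hchain, hmF]
  -- remove ε
  set J : ℝ := ∫ t in s₀..s, 2 * b t * Real.exp (2 * W t) with hJdef
  have hJ : 0 ≤ J := by
    rw [hJdef]
    exact intervalIntegral.integral_nonneg hs₀s (fun r _ => by have := hbnn r; positivity)
  clear_value J
  have hQ0 : 0 ≤ m * (1 + J) := mul_nonneg hm.le (by linarith)
  have hmain : |z s| + |deriv z s|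
      ≤ C * (aa s + ∫ t in s₀..s, aa t * b t * Real.exp (C * W t)) := by
    refine le_of_forall_pos_le_add fun δ hδ => ?_
    have hkey := key (δ / (m * (1 + J) + 1)) (div_pos hδ (by linarith))
    have hb2 : δ / (m * (1 + J) + 1) * (m * (1 + J)) ≤ δ := by
      rw [div_mul_eq_mul_div, div_le_iff₀ (by linarith)]
      nlinarith [hδ.le, hQ0]
    exact hkey.trans (add_le_add_right hb2 _)
  -- convert to the statement with deriv G
  have hsecond : (∫ t in s₀..s, aa t * b t * Real.exp (C * W t))
      = ∫ t in s₀..s, (|z₀| + |z₁| + ∫ r in s₀..t, |k r|) * |deriv G t|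
          * Real.exp (C * ∫ r in t..s, |deriv G r|) := by
    apply intervalIntegral.integral_congr_ae
    filter_upwards [hae s₁] with t ht htmem
    rw [Set.uIoc_of_le hs₀s] at htmem
    have htI : t ∈ Set.Ioo s₀ s₁ := ⟨htmem.1, lt_of_le_of_ne (le_trans htmem.2 hss₁) ht⟩
    have hbt : b t = |deriv G t| := by
      rw [hbdef, hdG_deriv t htI]
    have hWt : W t = ∫ r in t..s, |deriv G r| := by
      rw [hWdef]
      apply intervalIntegral.integral_congr_ae
      filter_upwards [hae s₁] with r hr hrmem
      rw [Set.uIoc_of_le htmem.2] at hrmem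
      have hrI : r ∈ Set.Ioo s₀ s₁ :=
        ⟨lt_trans htI.1 hrmem.1, lt_of_le_of_ne (le_trans hrmem.2 hss₁) hr⟩
      rw [hbdef, hdG_deriv r hrI]
    rw [hbt, hWt]
  calc |z s| + |deriv z s|
      ≤ C * (aa s + ∫ t in s₀..s, aa t * b t * Real.exp (C * W t)) := hmain
    _ = _ := by rw [hsecond]
end
end

section
/- For every smooth function u defined on the region {(t,x) ∈ ℝ^{1+3} : |x| < t}, the flat wave operator decomposes in the hyperboloidal frame as: -□u = ∂̄_0(∂̄_0 u) − Σ_{a=1}^3 ∂̄_a(∂̄_a u) + 2 Σ_{a=1}^3 (x^a/s̃) ∂̄_0(∂̄_a u) + (3/s̃) ∂̄_0 u, where s̃ = √(t²-|x|²), ∂̄_0 w = (s̃/t)∂_t w and ∂̄_a w = (x^a/t)∂_t w + ∂_a w. -/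
noncomputable section

open MeasureTheory Real

def pd (α : Fin 4) (u : (Fin 4 → ℝ) → ℝ) : (Fin 4 → ℝ) → ℝ :=
  fun p => fderiv ℝ u p (Pi.single α 1)

def pdI : List (Fin 4) → ((Fin 4 → ℝ) → ℝ) → ((Fin 4 → ℝ) → ℝ)
  | [], u => u
  | α :: I, u => pd α (pdI I u)

def Lb (a : Fin 3) (u : (Fin 4 → ℝ) → ℝ) : (Fin 4 → ℝ) → ℝ :=
  fun p => p a.succ * pd 0 u p + p 0 * pd a.succ u p

def LJ : List (Fin 3) → ((Fin 4 → ℝ) → ℝ) → ((Fin 4 → ℝ) → ℝ)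
  | [], u => u
  | a :: J, u => Lb a (LJ J u)

def sdu (a : Fin 3) (u : (Fin 4 → ℝ) → ℝ) : (Fin 4 → ℝ) → ℝ :=
  fun p => (p a.succ / p 0) * pd 0 u p + pd a.succ u p

def Box (u : (Fin 4 → ℝ) → ℝ) : (Fin 4 → ℝ) → ℝ :=
  fun p => -(pd 0 (pd 0 u) p) + ∑ a : Fin 3, pd a.succ (pd a.succ u) p

def rad (x : Fin 3 → ℝ) : ℝ := Real.sqrt (∑ a, (x a)^2)

def sp (p : Fin 4 → ℝ) : Fin 3 → ℝ := fun a => p a.succ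

def hyp (s : ℝ) (x : Fin 3 → ℝ) : Fin 4 → ℝ :=
  Fin.cons (Real.sqrt (s^2 + ∑ a, (x a)^2)) x

def L2f (s : ℝ) (w : (Fin 4 → ℝ) → ℝ) : ℝ :=
  Real.sqrt (∫ x : Fin 3 → ℝ, (w (hyp s x))^2)

def SuppK (u : (Fin 4 → ℝ) → ℝ) : Prop :=
  ∀ p : Fin 4 → ℝ, p 0 - 1 < rad (sp p) → u p = 0

def Em (s : ℝ) (u : (Fin 4 → ℝ) → ℝ) : ℝ :=
  ∫ x : Fin 3 → ℝ,
    (((s / hyp s x 0) * pd 0 u (hyp s x))^2 + ∑ a : Fin 3, (sdu a u (hyp s x))^2)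

def Emc (c s : ℝ) (u : (Fin 4 → ℝ) → ℝ) : ℝ :=
  Em s u + c^2 * ∫ x : Fin 3 → ℝ, (u (hyp s x))^2

def Kset : Set (Fin 4 → ℝ) := {p | rad (sp p) < p 0 - 1}

/-- The function `s̃ = √(t² - r²)`. -/
def st (p : Fin 4 → ℝ) : ℝ := Real.sqrt ((p 0)^2 - ∑ a : Fin 3, (p a.succ)^2)

/-- Hyperboloidal frame derivatives: `∂̄_0 = (s̃/t)∂_t`, `∂̄_a = (x^a/t)∂_t + ∂_a`. -/
def dbar (β : Fin 4) (u : (Fin 4 → ℝ) → ℝ) : (Fin 4 → ℝ) → ℝ :=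
  if β = 0 then fun p => (st p / p 0) * pd 0 u p
  else fun p => (p β / p 0) * pd 0 u p + pd β u p

private lemma pd_val {f : (Fin 4 → ℝ) → ℝ} {L : (Fin 4 → ℝ) →L[ℝ] ℝ} {p : Fin 4 → ℝ}
    (h : HasFDerivAt f L p) (α : Fin 4) : pd α f p = L (Pi.single α 1) := by
  simp only [pd]; rw [h.fderiv]

private lemma pd_addF (f g : (Fin 4 → ℝ) → ℝ) {p : Fin 4 → ℝ}
    (hf : DifferentiableAt ℝ f p) (hg : DifferentiableAt ℝ g p) (α : Fin 4) :
    pd α (fun q => f q + g q) p = pd α f p + pd α g p := by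
  simp only [pd, fderiv_fun_add hf hg, ContinuousLinearMap.add_apply]

private lemma pd_mulF (f g : (Fin 4 → ℝ) → ℝ) {p : Fin 4 → ℝ}
    (hf : DifferentiableAt ℝ f p) (hg : DifferentiableAt ℝ g p) (α : Fin 4) :
    pd α (fun q => f q * g q) p = f p * pd α g p + g p * pd α f p := by
  simp only [pd, fderiv_fun_mul hf hg, ContinuousLinearMap.add_apply,
    ContinuousLinearMap.smul_apply, smul_eq_mul]

private lemma pd_invF (f : (Fin 4 → ℝ) → ℝ) {p : Fin 4 → ℝ}
    (hf : DifferentiableAt ℝ f p) (h0 : f p ≠ 0) (α : Fin 4) :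
    pd α (fun q => (f q)⁻¹) p = -pd α f p / f p ^ 2 := by
  have h := (hasDerivAt_inv h0).comp_hasFDerivAt p hf.hasFDerivAt
  rw [show (fun q => (f q)⁻¹) = (fun y => y⁻¹) ∘ f from rfl, pd_val h]
  simp only [ContinuousLinearMap.smul_apply, smul_eq_mul, pd]
  field_simp

private lemma hasFDerivAt_coord (i : Fin 4) (p : Fin 4 → ℝ) :
    HasFDerivAt (fun q : Fin 4 → ℝ => q i)
      (ContinuousLinearMap.proj (R := ℝ) (φ := fun _ : Fin 4 => ℝ) i) p :=
  (ContinuousLinearMap.proj (R := ℝ) (φ := fun _ : Fin 4 => ℝ) i).hasFDerivAt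

private lemma pd_coord (α i : Fin 4) (p : Fin 4 → ℝ) :
    pd α (fun q : Fin 4 → ℝ => q i) p = if i = α then 1 else 0 := by
  rw [pd_val (hasFDerivAt_coord i p)]
  simp [Pi.single_apply]

set_option maxHeartbeats 2000000 in
/-- decomposition of the flat wave operator in the hyperboloidal
frame: `-□u = ∂̄_0∂̄_0 u - Σ_a ∂̄_a∂̄_a u + 2Σ_a (x^a/s̃) ∂̄_0∂̄_a u + (3/s̃) ∂̄_0 u`
inside the cone `{|x| < t}`. -/

theorem wave_operator_hyperboloidal_decomposition
    (u : (Fin 4 → ℝ) → ℝ) (hu : ContDiffOn ℝ (⊤ : ℕ∞) u {p : Fin 4 → ℝ | rad (sp p) < p 0}) :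
    ∀ p : Fin 4 → ℝ, rad (sp p) < p 0 →
      -(Box u p)
        = dbar 0 (dbar 0 u) p - (∑ a : Fin 3, dbar a.succ (dbar a.succ u) p)
          + 2 * (∑ a : Fin 3, (p a.succ / st p) * dbar 0 (dbar a.succ u) p)
          + (3 / st p) * dbar 0 u p := by
  intro p hp
  have hrad : 0 ≤ rad (sp p) := Real.sqrt_nonneg _
  have ht : 0 < p 0 := lt_of_le_of_lt hrad hp
  have ht' : p 0 ≠ 0 := ne_of_gt ht
  have hsum : ∑ a : Fin 3, (p a.succ) ^ 2 = rad (sp p) ^ 2 := by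
    rw [rad, Real.sq_sqrt (Finset.sum_nonneg fun a _ => sq_nonneg _)]; rfl
  have hq : 0 < (p 0) ^ 2 - ∑ a : Fin 3, (p a.succ) ^ 2 := by
    rw [hsum]; nlinarith
  have hs : 0 < st p := Real.sqrt_pos.2 hq
  have hs' : st p ≠ 0 := ne_of_gt hs
  have hs2 : st p ^ 2 = (p 0) ^ 2 - ∑ a : Fin 3, (p a.succ) ^ 2 := Real.sq_sqrt hq.le
  -- smoothness facts
  have hop : IsOpen {p : Fin 4 → ℝ | rad (sp p) < p 0} := by
    apply isOpen_lt
    · unfold rad sp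
      exact Real.continuous_sqrt.comp (by fun_prop)
    · exact continuous_apply 0
  have hCA : ContDiffAt ℝ (⊤ : ℕ∞) u p := hu.contDiffAt (hop.mem_nhds hp)
  have hderiv : DifferentiableAt ℝ (fderiv ℝ u) p :=
    (hCA.fderiv_right (m := 1) (WithTop.coe_le_coe.2 le_top)).differentiableAt one_ne_zero
  have hpdF : ∀ β : Fin 4, HasFDerivAt (pd β u)
      ((fderiv ℝ u p).comp (0 : (Fin 4 → ℝ) →L[ℝ] (Fin 4 → ℝ))
        + (fderiv ℝ (fderiv ℝ u) p).flip (Pi.single β 1)) p :=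
    fun β => hderiv.hasFDerivAt.clm_apply (hasFDerivAt_const _ _)
  have hpdd : ∀ β : Fin 4, DifferentiableAt ℝ (pd β u) p := fun β => (hpdF β).differentiableAt
  have hpdval : ∀ α β : Fin 4, pd α (pd β u) p
      = fderiv ℝ (fderiv ℝ u) p (Pi.single α 1) (Pi.single β 1) := by
    intro α β; rw [pd_val (hpdF β)]; simp
  have hsym : ∀ a : Fin 3, pd a.succ (pd 0 u) p = pd 0 (pd a.succ u) p := by
    intro a; rw [hpdval, hpdval]
    exact (hCA.isSymmSndFDerivAt (by rw [minSmoothness_of_isRCLikeNormedField]; exact WithTop.coe_le_coe.2 le_top)).eq _ _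
  -- derivative of st
  have s1 : (0 : Fin 3).succ = (1 : Fin 4) := rfl
  have s2 : (1 : Fin 3).succ = (2 : Fin 4) := rfl
  have s3 : (2 : Fin 3).succ = (3 : Fin 4) := rfl
  have st_eq : st = fun q : Fin 4 → ℝ =>
      Real.sqrt (q 0 * q 0 - (q 1 * q 1 + (q 2 * q 2 + q 3 * q 3))) := by
    funext q
    rw [st, Fin.sum_univ_three, s1, s2, s3]
    ring_nf
  have harg : p 0 * p 0 - (p 1 * p 1 + (p 2 * p 2 + p 3 * p 3))
      = (p 0) ^ 2 - ∑ a : Fin 3, (p a.succ) ^ 2 := by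
    rw [Fin.sum_univ_three, s1, s2, s3]; ring
  have hsqrt_eq : Real.sqrt (p 0 * p 0 - (p 1 * p 1 + (p 2 * p 2 + p 3 * p 3))) = st p := by
    rw [harg]; rfl
  have hne : p 0 * p 0 - (p 1 * p 1 + (p 2 * p 2 + p 3 * p 3)) ≠ 0 := by
    rw [harg]; exact ne_of_gt hq
  have hstF : HasFDerivAt st
      ((1 / (2 * Real.sqrt (p 0 * p 0 - (p 1 * p 1 + (p 2 * p 2 + p 3 * p 3))))) •
        ((p 0 • ContinuousLinearMap.proj (R := ℝ) (φ := fun _ : Fin 4 => ℝ) 0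
            + p 0 • ContinuousLinearMap.proj 0)
          - ((p 1 • ContinuousLinearMap.proj 1 + p 1 • ContinuousLinearMap.proj 1)
            + ((p 2 • ContinuousLinearMap.proj 2 + p 2 • ContinuousLinearMap.proj 2)
              + (p 3 • ContinuousLinearMap.proj 3 + p 3 • ContinuousLinearMap.proj 3))))) p := by
    rw [st_eq]
    exact (((hasFDerivAt_coord 0 p).mul (hasFDerivAt_coord 0 p)).sub
      (((hasFDerivAt_coord 1 p).mul (hasFDerivAt_coord 1 p)).add
        (((hasFDerivAt_coord 2 p).mul (hasFDerivAt_coord 2 p)).add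
          ((hasFDerivAt_coord 3 p).mul (hasFDerivAt_coord 3 p))))).sqrt hne
  have hstd : DifferentiableAt ℝ st p := hstF.differentiableAt
  have pdst0 : pd 0 st p = p 0 / st p := by
    rw [pd_val hstF 0, hsqrt_eq]
    simp only [ContinuousLinearMap.smul_apply, ContinuousLinearMap.sub_apply,
      ContinuousLinearMap.add_apply, ContinuousLinearMap.proj_apply, Pi.single_apply,
      smul_eq_mul]
    simp
    field_simp
    ring
  -- inversion of the time coordinate
  have hinvd : DifferentiableAt ℝ (fun q : Fin 4 → ℝ => (q 0)⁻¹) p :=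
    ((hasFDerivAt_coord 0 p).differentiableAt).inv ht'
  have pdinv : ∀ α : Fin 4,
      pd α (fun q : Fin 4 → ℝ => (q 0)⁻¹) p = -(if (0 : Fin 4) = α then 1 else 0) / (p 0) ^ 2 := by
    intro α
    rw [pd_invF (fun q : Fin 4 → ℝ => q 0) (hasFDerivAt_coord 0 p).differentiableAt ht' α,
      pd_coord]
  -- main computations
  have hG0 : DifferentiableAt ℝ (fun q : Fin 4 → ℝ => st q * (q 0)⁻¹) p := hstd.mul hinvd
  have R1 : pd 0 (fun q : Fin 4 → ℝ => st q * (q 0)⁻¹) p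
      = (p 0 / st p) * (p 0)⁻¹ - st p / (p 0) ^ 2 := by
    rw [pd_mulF st (fun q : Fin 4 → ℝ => (q 0)⁻¹) hstd hinvd 0, pdinv 0, pdst0]
    simp
    field_simp
    ring
  have T1 : dbar 0 (dbar 0 u) p
      = ((p 0) ^ 2 - st p ^ 2) / (p 0) ^ 3 * pd 0 u p + st p ^ 2 / (p 0) ^ 2 * pd 0 (pd 0 u) p := by
    have h1 : dbar 0 u = fun q => st q * (q 0)⁻¹ * pd 0 u q := by
      funext q; simp [dbar, div_eq_mul_inv]
    rw [show dbar 0 (dbar 0 u) p = st p / p 0 * pd 0 (dbar 0 u) p from by simp [dbar], h1,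
      pd_mulF (fun q : Fin 4 → ℝ => st q * (q 0)⁻¹) (pd 0 u) hG0 (hpdd 0) 0, R1]
    field_simp
    ring
  have T4 : (3 / st p) * dbar 0 u p = 3 / p 0 * pd 0 u p := by
    rw [show dbar 0 u p = st p / p 0 * pd 0 u p from by simp [dbar]]
    field_simp
  -- per-index computations
  have hcd : ∀ a : Fin 3, DifferentiableAt ℝ (fun q : Fin 4 → ℝ => q a.succ) p :=
    fun a => (hasFDerivAt_coord a.succ p).differentiableAt
  have hGa : ∀ a : Fin 3, DifferentiableAt ℝ (fun q : Fin 4 → ℝ => q a.succ * (q 0)⁻¹) p :=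
    fun a => (hcd a).mul hinvd
  have R2a0 : ∀ a : Fin 3, pd 0 (fun q : Fin 4 → ℝ => q a.succ * (q 0)⁻¹) p
      = -(p a.succ) / (p 0) ^ 2 := by
    intro a
    rw [pd_mulF (fun q : Fin 4 → ℝ => q a.succ) (fun q : Fin 4 → ℝ => (q 0)⁻¹)
        (hcd a) hinvd 0, pdinv 0, pd_coord]
    simp [Fin.succ_ne_zero a]
    ring
  have R2aa : ∀ a : Fin 3, pd a.succ (fun q : Fin 4 → ℝ => q a.succ * (q 0)⁻¹) p
      = (p 0)⁻¹ := by
    intro a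
    rw [pd_mulF (fun q : Fin 4 → ℝ => q a.succ) (fun q : Fin 4 → ℝ => (q 0)⁻¹)
        (hcd a) hinvd a.succ, pdinv a.succ, pd_coord]
    simp [(Fin.succ_ne_zero a).symm]
  have hdba_eq : ∀ a : Fin 3,
      dbar a.succ u = fun q => q a.succ * (q 0)⁻¹ * pd 0 u q + pd a.succ u q := by
    intro a; funext q; simp [dbar, Fin.succ_ne_zero a, div_eq_mul_inv]
  have P0 : ∀ a : Fin 3, pd 0 (dbar a.succ u) p
      = (-(p a.succ) / (p 0) ^ 2 * pd 0 u p + p a.succ * (p 0)⁻¹ * pd 0 (pd 0 u) p)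
        + pd 0 (pd a.succ u) p := by
    intro a
    rw [hdba_eq a,
      pd_addF (fun q : Fin 4 → ℝ => q a.succ * (q 0)⁻¹ * pd 0 u q) (pd a.succ u)
        ((hGa a).mul (hpdd 0)) (hpdd a.succ) 0,
      pd_mulF (fun q : Fin 4 → ℝ => q a.succ * (q 0)⁻¹) (pd 0 u) (hGa a) (hpdd 0) 0,
      R2a0 a]
    ring
  have Pa : ∀ a : Fin 3, pd a.succ (dbar a.succ u) p
      = ((p 0)⁻¹ * pd 0 u p + p a.succ * (p 0)⁻¹ * pd 0 (pd a.succ u) p)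
        + pd a.succ (pd a.succ u) p := by
    intro a
    rw [hdba_eq a,
      pd_addF (fun q : Fin 4 → ℝ => q a.succ * (q 0)⁻¹ * pd 0 u q) (pd a.succ u)
        ((hGa a).mul (hpdd 0)) (hpdd a.succ) a.succ,
      pd_mulF (fun q : Fin 4 → ℝ => q a.succ * (q 0)⁻¹) (pd 0 u) (hGa a) (hpdd 0) a.succ,
      R2aa a, hsym a]
    ring
  have T2 : ∀ a : Fin 3, dbar a.succ (dbar a.succ u) p
      = (p a.succ / p 0) *
          ((-(p a.succ) / (p 0) ^ 2 * pd 0 u p + p a.succ * (p 0)⁻¹ * pd 0 (pd 0 u) p)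
            + pd 0 (pd a.succ u) p)
        + (((p 0)⁻¹ * pd 0 u p + p a.succ * (p 0)⁻¹ * pd 0 (pd a.succ u) p)
            + pd a.succ (pd a.succ u) p) := by
    intro a
    rw [show dbar a.succ (dbar a.succ u) p
        = (p a.succ / p 0) * pd 0 (dbar a.succ u) p + pd a.succ (dbar a.succ u) p from by
      simp [dbar, Fin.succ_ne_zero a], P0 a, Pa a]
  have T3 : ∀ a : Fin 3, (p a.succ / st p) * dbar 0 (dbar a.succ u) p
      = (p a.succ / p 0) *
          ((-(p a.succ) / (p 0) ^ 2 * pd 0 u p + p a.succ * (p 0)⁻¹ * pd 0 (pd 0 u) p)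
            + pd 0 (pd a.succ u) p) := by
    intro a
    rw [show dbar 0 (dbar a.succ u) p = st p / p 0 * pd 0 (dbar a.succ u) p from by
      simp [dbar], P0 a]
    field_simp
  rw [T1, T4,
    show (∑ a : Fin 3, dbar a.succ (dbar a.succ u) p) = _ from Finset.sum_congr rfl fun a _ => T2 a,
    show (∑ a : Fin 3, (p a.succ / st p) * dbar 0 (dbar a.succ u) p) = _ from
      Finset.sum_congr rfl fun a _ => T3 a,
    hs2]
  simp only [Box, Fin.sum_univ_three]
  field_simp
  ring
end
end

section
/- For all multi-indices I (of coordinate derivatives) and J (of Lorentz boosts), there is a constant C(|I|,|J|) such that for every smooth function u defined in the cone K and every α ∈ {0,1,2,3}: |∂^I L^J ((s̃/t) ∂_α u)| ≤ |(s̃/t) ∂_α ∂^I L^J u| + C(|I|,|J|) Σ |(s̃/t) ∂_β ∂^{I'} L^{J'} u| pointwise in K, where s̃ = √(t²-|x|²) and the sum ranges over β ∈ {0,1,2,3} and multi-indices I', J' with |I'| ≤ |I| and |J'| ≤ |J|. -/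
noncomputable section

open MeasureTheory Real

lemma pd_proj (γ i : Fin 4) (p : Fin 4 → ℝ) :
    pd γ (fun q => q i) p = (Pi.single γ 1 : Fin 4 → ℝ) i := by
  have : (fun q : Fin 4 → ℝ => q i) = (ContinuousLinearMap.proj i : (Fin 4 → ℝ) →L[ℝ] ℝ) := rfl
  rw [pd, this, ContinuousLinearMap.fderiv]; rfl

lemma pd_const (γ : Fin 4) (c : ℝ) (p : Fin 4 → ℝ) : pd γ (fun _ => c) p = 0 := by simp [pd]

lemma pd_mul (γ : Fin 4) {f g : (Fin 4 → ℝ) → ℝ} {p} (hf : DifferentiableAt ℝ f p)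
    (hg : DifferentiableAt ℝ g p) :
    pd γ (fun q => f q * g q) p = f p * pd γ g p + g p * pd γ f p := by
  simp [pd, fderiv_fun_mul hf hg]

lemma pd_add (γ : Fin 4) {f g : (Fin 4 → ℝ) → ℝ} {p} (hf : DifferentiableAt ℝ f p)
    (hg : DifferentiableAt ℝ g p) :
    pd γ (fun q => f q + g q) p = pd γ f p + pd γ g p := by
  simp [pd, fderiv_fun_add hf hg]

lemma contDiff_pd {u : (Fin 4 → ℝ) → ℝ} (hu : ContDiff ℝ (⊤ : ℕ∞) u) (γ : Fin 4) :
    ContDiff ℝ (⊤ : ℕ∞) (pd γ u) :=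
  (hu.fderiv_right (by simp)).clm_apply contDiff_const

lemma contDiff_proj (i : Fin 4) : ContDiff ℝ (⊤ : ℕ∞) (fun q : Fin 4 → ℝ => q i) :=
  (ContinuousLinearMap.proj i : (Fin 4 → ℝ) →L[ℝ] ℝ).contDiff

lemma contDiff_Lb {u : (Fin 4 → ℝ) → ℝ} (hu : ContDiff ℝ (⊤ : ℕ∞) u) (a : Fin 3) :
    ContDiff ℝ (⊤ : ℕ∞) (Lb a u) :=
  ((contDiff_proj a.succ).mul (contDiff_pd hu 0)).add
    ((contDiff_proj 0).mul (contDiff_pd hu a.succ))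

/-- polynomials of (total) degree ≤ d -/
inductive Pl : ℕ → ((Fin 4 → ℝ) → ℝ) → Prop
  | const (c : ℝ) : Pl 0 (fun _ => c)
  | coord (i : Fin 4) : Pl 1 (fun p => p i)
  | add {d f g} : Pl d f → Pl d g → Pl d (fun p => f p + g p)
  | mul {d e f g} : Pl d f → Pl e g → Pl (d + e) (fun p => f p * g p)
  | mono {d e f} : Pl d f → d ≤ e → Pl e f
  | conv {d f g} : Pl d f → (∀ p, f p = g p) → Pl d g

lemma Pl.contDiff {d P} (h : Pl d P) : ContDiff ℝ (⊤ : ℕ∞) P := by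
  induction h with
  | const c => exact contDiff_const
  | coord i => exact contDiff_proj i
  | add _ _ hf hg => exact hf.add hg
  | mul _ _ hf hg => exact hf.mul hg
  | mono _ _ hf => exact hf
  | conv _ hfg hf => exact (funext hfg : _ = _) ▸ hf

lemma Pl.deriv {d P} (h : Pl d P) (γ : Fin 4) : Pl d (pd γ P) := by
  induction h with
  | const c => exact (Pl.const 0).conv (fun p => (pd_const γ c p).symm)
  | coord i =>
      exact ((Pl.const ((Pi.single γ 1 : Fin 4 → ℝ) i)).conv
        (fun p => (pd_proj γ i p).symm)).mono (by omega)
  | add hf hg hf' hg' =>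
      exact (hf'.add hg').conv
        (fun p => (pd_add γ (hf.contDiff.differentiable (by simp) p)
          (hg.contDiff.differentiable (by simp) p)).symm)
  | mul hf hg hf' hg' =>
      exact ((hf.mul hg').add ((hf'.mul hg).conv (fun p => mul_comm _ _))).conv
        (fun p => (pd_mul γ (hf.contDiff.differentiable (by simp) p)
          (hg.contDiff.differentiable (by simp) p)).symm)
  | mono hf hde hf' => exact hf'.mono hde
  | conv hf hfg hf' =>
      exact hf'.conv (fun p => congrArg (fun F => pd γ F p) (funext hfg))

lemma Pl.lb {d P} (h : Pl d P) (a : Fin 3) : Pl d (Lb a P) := by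
  have h1 : Pl 1 (fun p : Fin 4 → ℝ => p a.succ) := Pl.coord a.succ
  have h2 : Pl 1 (fun p : Fin 4 → ℝ => p 0) := Pl.coord 0
  induction h with
  | const c =>
      refine (Pl.const 0).conv (fun p => ?_)
      simp [Lb, pd_const]
  | coord i =>
      refine ((h1.mul (Pl.const ((Pi.single (0:Fin 4) 1 : Fin 4 → ℝ) i))).add
        (h2.mul (Pl.const ((Pi.single a.succ 1 : Fin 4 → ℝ) i))) |>.conv (fun p => ?_)).mono
          (by omega)
      simp [Lb, pd_proj]
  | add hf hg hf' hg' =>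
      refine (hf'.add hg').conv (fun p => ?_)
      simp only [Lb, pd_add 0 (hf.contDiff.differentiable (by simp) p)
        (hg.contDiff.differentiable (by simp) p), pd_add a.succ
        (hf.contDiff.differentiable (by simp) p) (hg.contDiff.differentiable (by simp) p)]
      ring
  | mul hf hg hf' hg' =>
      refine ((hf.mul hg').add ((hf'.mul hg).conv (fun p => mul_comm _ _))).conv
        (fun p => ?_)
      simp only [Lb, pd_mul 0 (hf.contDiff.differentiable (by simp) p)
        (hg.contDiff.differentiable (by simp) p), pd_mul a.succ
        (hf.contDiff.differentiable (by simp) p) (hg.contDiff.differentiable (by simp) p)]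
      ring
  | mono hf hde hf' => exact hf'.mono hde
  | conv hf hfg hf' =>
      exact hf'.conv (fun p => congrArg (fun F => Lb a F p) (funext hfg))

-- Kset facts
lemma Kset_facts {p : Fin 4 → ℝ} (hp : p ∈ Kset) :
    1 < p 0 ∧ (∀ i : Fin 4, |p i| ≤ p 0) ∧ (∑ a : Fin 3, (p a.succ)^2) < (p 0 - 1)^2 := by
  have h0 : rad (sp p) < p 0 - 1 := hp
  have hr0 : 0 ≤ rad (sp p) := Real.sqrt_nonneg _
  have ht : 1 < p 0 := by linarith
  have hsq : (∑ a : Fin 3, (p a.succ)^2) < (p 0 - 1)^2 := by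
    have := Real.sq_sqrt (by positivity : (0:ℝ) ≤ ∑ a : Fin 3, (sp p a)^2)
    have h2 : rad (sp p) ^ 2 < (p 0 - 1)^2 := by
      apply pow_lt_pow_left₀ h0 hr0 (by norm_num)
    rw [rad] at h2
    rw [Real.sq_sqrt (by positivity)] at h2
    simpa [sp] using h2
  refine ⟨ht, fun i => ?_, hsq⟩
  rcases Fin.eq_zero_or_eq_succ i with h | ⟨j, rfl⟩
  · subst h; rw [abs_of_pos (by linarith)]
  · have h1 : (p j.succ)^2 ≤ ∑ a : Fin 3, (p a.succ)^2 :=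
      Finset.single_le_sum (f := fun a : Fin 3 => (p a.succ)^2)
        (fun a _ => sq_nonneg _) (Finset.mem_univ j)
    have h2 : (p j.succ)^2 ≤ (p 0)^2 := by nlinarith
    calc |p j.succ| = Real.sqrt ((p j.succ)^2) := (Real.sqrt_sq_eq_abs _).symm
      _ ≤ Real.sqrt ((p 0)^2) := Real.sqrt_le_sqrt h2
      _ = p 0 := by rw [Real.sqrt_sq (by linarith)]

lemma Pl.bound {d P} (h : Pl d P) : ∃ C > 0, ∀ p ∈ Kset, ∀ e, d ≤ e → |P p| ≤ C * p 0 ^ e := by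
  induction h with
  | const c =>
      refine ⟨|c| + 1, by positivity, fun p hp e he => ?_⟩
      have h1 := (Kset_facts hp).1
      have : (1:ℝ) ≤ p 0 ^ e := one_le_pow₀ (by linarith)
      nlinarith [abs_nonneg c]
  | coord i =>
      refine ⟨1, one_pos, fun p hp e he => ?_⟩
      have h2 := (Kset_facts hp).2.1 i
      have h1 := (Kset_facts hp).1
      have : p 0 ^ 1 ≤ p 0 ^ e := pow_le_pow_right₀ (by linarith) he
      rw [pow_one] at this; rw [one_mul]; linarith
  | add _ _ hf hg =>
      obtain ⟨C1, hC1, h1⟩ := hf; obtain ⟨C2, hC2, h2⟩ := hg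
      refine ⟨C1 + C2, by positivity, fun p hp e he => ?_⟩
      calc |_ + _| ≤ |_| + |_| := abs_add_le _ _
        _ ≤ C1 * p 0 ^ e + C2 * p 0 ^ e := add_le_add (h1 p hp e he) (h2 p hp e he)
        _ = (C1 + C2) * p 0 ^ e := by ring
  | @mul d1 e1 f1 g1 hfp hgp hf hg =>
      obtain ⟨C1, hC1, h1⟩ := hf; obtain ⟨C2, hC2, h2⟩ := hg
      refine ⟨C1 * C2, by positivity, fun p hp e he => ?_⟩
      have hpos := (Kset_facts hp).1
      have hde : _ + _ ≤ e := he
      rw [abs_mul]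
      have hb1 := h1 p hp _ (le_refl _)
      have hb2 := h2 p hp _ (le_refl _)
      have key : |_| * |_| ≤ (C1 * p 0 ^ _) * (C2 * p 0 ^ _) :=
        mul_le_mul hb1 hb2 (abs_nonneg _) ((abs_nonneg _).trans hb1)
      refine key.trans ?_
      have hpe : p 0 ^ (_ + _) ≤ p 0 ^ e := pow_le_pow_right₀ (by linarith) hde
      rw [pow_add] at hpe
      calc C1 * p 0 ^ d1 * (C2 * p 0 ^ e1) = C1 * C2 * (p 0 ^ d1 * p 0 ^ e1) := by ring
        _ ≤ C1 * C2 * p 0 ^ e := mul_le_mul_of_nonneg_left hpe (by positivity)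
  | mono hfd hde hf =>
      obtain ⟨C, hC, h1⟩ := hf
      exact ⟨C, hC, fun p hp e he => h1 p hp e (le_trans hde he)⟩
  | conv _ hfg hf =>
      obtain ⟨C, hC, h1⟩ := hf
      exact ⟨C, hC, fun p hp e he => by rw [← hfg p]; exact h1 p hp e he⟩

/-! ### s2, Vset, st -/

def s2 (p : Fin 4 → ℝ) : ℝ := (p 0)^2 - ∑ a : Fin 3, (p a.succ)^2

def Vset : Set (Fin 4 → ℝ) := {p | 0 < p 0 ∧ 0 < s2 p}

lemma st_eq (p : Fin 4 → ℝ) : st p = Real.sqrt (s2 p) := rfl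

lemma isOpen_Vset : IsOpen Vset := by
  have h2 : Continuous s2 := by
    unfold s2; fun_prop
  exact (isOpen_lt continuous_const (continuous_apply 0)).inter (isOpen_lt continuous_const h2)

lemma Kset_sub_Vset : Kset ⊆ Vset := by
  intro p hp
  obtain ⟨h1, _, h3⟩ := Kset_facts hp
  refine ⟨by linarith, ?_⟩
  simp only [s2]; nlinarith

lemma Kset_s2 {p : Fin 4 → ℝ} (hp : p ∈ Kset) : p 0 ≤ s2 p := by
  obtain ⟨h1, _, h3⟩ := Kset_facts hp
  simp only [s2]; nlinarith

lemma Vset_st_pos {p : Fin 4 → ℝ} (hp : p ∈ Vset) : 0 < st p := by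
  rw [st_eq]; exact Real.sqrt_pos.mpr hp.2

lemma Vset_st_sq {p : Fin 4 → ℝ} (hp : p ∈ Vset) : st p ^ 2 = s2 p := by
  rw [st_eq]; exact Real.sq_sqrt (le_of_lt hp.2)

def ds2f (γ : Fin 4) (p : Fin 4 → ℝ) : ℝ :=
  2 * p 0 * (Pi.single γ 1 : Fin 4 → ℝ) 0
    - ∑ a : Fin 3, 2 * p a.succ * (Pi.single γ 1 : Fin 4 → ℝ) a.succ

lemma Pl_ds2f (γ : Fin 4) : Pl 1 (ds2f γ) := by
  have mk : ∀ (i : Fin 4) (c : ℝ), Pl 1 (fun p : Fin 4 → ℝ => c * p i) :=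
    fun i c => (Pl.const c).mul (Pl.coord i)
  have hb : Pl 1 (fun p : Fin 4 → ℝ =>
      (2 * (Pi.single γ 1 : Fin 4 → ℝ) 0) * p 0
      + ((-2 * (Pi.single γ 1 : Fin 4 → ℝ) ((0:Fin 3).succ)) * p ((0:Fin 3).succ)
      + ((-2 * (Pi.single γ 1 : Fin 4 → ℝ) ((1:Fin 3).succ)) * p ((1:Fin 3).succ)
      + (-2 * (Pi.single γ 1 : Fin 4 → ℝ) ((2:Fin 3).succ)) * p ((2:Fin 3).succ)))) :=
    (mk _ _).add ((mk _ _).add ((mk _ _).add (mk _ _)))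
  refine hb.conv (fun p => ?_)
  simp only [ds2f, Fin.sum_univ_three]
  ring

/-- fderiv data for `s2` -/
lemma s2_hasF (p : Fin 4 → ℝ) :
    ∃ Φ : (Fin 4 → ℝ) →L[ℝ] ℝ, HasFDerivAt s2 Φ p ∧
      ∀ γ, Φ (Pi.single γ 1) = ds2f γ p := by
  refine ⟨((2:ℕ) * p 0 ^ 1) • (ContinuousLinearMap.proj 0 : (Fin 4 → ℝ) →L[ℝ] ℝ)
      - ∑ a : Fin 3, ((2:ℕ) * p a.succ ^ 1) •
          (ContinuousLinearMap.proj a.succ : (Fin 4 → ℝ) →L[ℝ] ℝ), ?_, ?_⟩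
  · have h0 : HasFDerivAt (fun q : Fin 4 → ℝ => q 0 ^ 2)
        (((2:ℕ) * p 0 ^ 1) • (ContinuousLinearMap.proj 0 : (Fin 4 → ℝ) →L[ℝ] ℝ)) p := by
      have := (hasDerivAt_pow 2 (p 0)).comp_hasFDerivAt p
        ((ContinuousLinearMap.proj 0 : (Fin 4 → ℝ) →L[ℝ] ℝ).hasFDerivAt)
      exact this
    have ha : ∀ a : Fin 3, HasFDerivAt (fun q : Fin 4 → ℝ => q a.succ ^ 2)
        (((2:ℕ) * p a.succ ^ 1) •
          (ContinuousLinearMap.proj a.succ : (Fin 4 → ℝ) →L[ℝ] ℝ)) p := by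
      intro a
      have := (hasDerivAt_pow 2 (p a.succ)).comp_hasFDerivAt p
        ((ContinuousLinearMap.proj a.succ : (Fin 4 → ℝ) →L[ℝ] ℝ).hasFDerivAt)
      exact this
    have hsum := HasFDerivAt.fun_sum (fun a (_ : a ∈ Finset.univ) => ha a)
    exact h0.sub hsum
  · intro γ
    simp only [ContinuousLinearMap.sub_apply, ContinuousLinearMap.smul_apply,
      ContinuousLinearMap.sum_apply, ContinuousLinearMap.proj_apply, smul_eq_mul, ds2f,
      Fin.sum_univ_three]
    simp

lemma st_hasF {p : Fin 4 → ℝ} (hp : p ∈ Vset) :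
    ∃ Φ : (Fin 4 → ℝ) →L[ℝ] ℝ, HasFDerivAt st Φ p ∧
      ∀ γ, Φ (Pi.single γ 1) = ds2f γ p / (2 * st p) := by
  obtain ⟨Φ2, h2, he2⟩ := s2_hasF p
  refine ⟨(1 / (2 * Real.sqrt (s2 p))) • Φ2, ?_, ?_⟩
  · have h := (Real.hasDerivAt_sqrt (ne_of_gt hp.2)).comp_hasFDerivAt p h2
    exact h
  · intro γ
    simp only [ContinuousLinearMap.smul_apply, smul_eq_mul, he2, st_eq]
    field_simp

lemma coef_hasF (P : (Fin 4 → ℝ) → ℝ) (hP : ContDiff ℝ (⊤ : ℕ∞) P) (m k : ℕ) {p : Fin 4 → ℝ}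
    (hp : p ∈ Vset) :
    ∃ Φ : (Fin 4 → ℝ) →L[ℝ] ℝ,
      HasFDerivAt (fun q => P q * st q / (q 0 ^ m * s2 q ^ k)) Φ p ∧
      ∀ γ, Φ (Pi.single γ 1) =
        pd γ P p * st p / (p 0 ^ m * s2 p ^ k)
        + (P p * (ds2f γ p * (1/2))) * st p / (p 0 ^ m * s2 p ^ (k+1))
        + ((-(m:ℝ) * (Pi.single γ 1 : Fin 4 → ℝ) 0) * P p) * st p / (p 0 ^ (m+1) * s2 p ^ k)
        + ((-(k:ℝ)) * ds2f γ p * P p) * st p / (p 0 ^ m * s2 p ^ (k+1)) := by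
  have ht0 : 0 < p 0 := hp.1
  have hs20 : 0 < s2 p := hp.2
  have hst0 : 0 < st p := Vset_st_pos hp
  have hstsq : st p ^ 2 = s2 p := Vset_st_sq hp
  obtain ⟨Φ2, h2, he2⟩ := s2_hasF p
  obtain ⟨Φs, hs, hes⟩ := st_hasF hp
  have hP' : HasFDerivAt P (fderiv ℝ P p) p :=
    (hP.differentiable (by simp) p).hasFDerivAt
  have hnum := hP'.fun_mul hs
  have htm : HasFDerivAt (fun q : Fin 4 → ℝ => q 0 ^ m)
      (((m:ℝ) * p 0 ^ (m-1)) • (ContinuousLinearMap.proj 0 : (Fin 4 → ℝ) →L[ℝ] ℝ)) p := by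
    have := (hasDerivAt_pow m (p 0)).comp_hasFDerivAt p
      ((ContinuousLinearMap.proj 0 : (Fin 4 → ℝ) →L[ℝ] ℝ).hasFDerivAt)
    exact this
  have hs2k : HasFDerivAt (fun q : Fin 4 → ℝ => s2 q ^ k)
      (((k:ℝ) * s2 p ^ (k-1)) • Φ2) p := by
    have := (hasDerivAt_pow k (s2 p)).comp_hasFDerivAt p h2
    exact this
  have hden := htm.fun_mul hs2k
  have hdne : p 0 ^ m * s2 p ^ k ≠ 0 := by positivity
  have hinv := (hasDerivAt_inv hdne).comp_hasFDerivAt p hden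
  have hc := hnum.fun_mul hinv
  refine ⟨_, by simp only [div_eq_mul_inv]; exact hc, ?_⟩
  intro γ
  simp only [ContinuousLinearMap.add_apply, ContinuousLinearMap.smul_apply, smul_eq_mul,
    ContinuousLinearMap.proj_apply, he2, hes, Function.comp_apply]
  have hpd : fderiv ℝ P p (Pi.single γ 1) = pd γ P p := rfl
  rw [hpd]
  have hTne : p 0 ≠ 0 := ne_of_gt ht0
  have hSne : st p ≠ 0 := ne_of_gt hst0
  have hQne : s2 p ≠ 0 := ne_of_gt hs20
  rcases m with _ | m <;> rcases k with _ | k <;>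
    · simp only [Nat.cast_zero, Nat.cast_succ, Nat.succ_sub_one, pow_zero, Nat.zero_sub,
        zero_mul, neg_zero, mul_zero, zero_add, add_zero, mul_one, one_mul]
      rw [← hstsq]
      field_simp
      ring

lemma contDiff_pdI {u} (hu : ContDiff ℝ (⊤ : ℕ∞) u) (M : List (Fin 4)) : ContDiff ℝ (⊤ : ℕ∞) (pdI M u) := by
  induction M with
  | nil => exact hu
  | cons γ M ih => exact contDiff_pd ih γ

lemma contDiff_LJ {u} (hu : ContDiff ℝ (⊤ : ℕ∞) u) (J : List (Fin 3)) : ContDiff ℝ (⊤ : ℕ∞) (LJ J u) := by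
  induction J with
  | nil => exact hu
  | cons a J ih => exact contDiff_Lb ih a

/-- Schwarz symmetry for smooth functions. -/
lemma pd_comm {v : (Fin 4 → ℝ) → ℝ} (hv : ContDiff ℝ (⊤ : ℕ∞) v) (β γ : Fin 4) (p : Fin 4 → ℝ) :
    pd γ (pd β v) p = pd β (pd γ v) p := by
  have hd : DifferentiableAt ℝ (fderiv ℝ v) p :=
    ((hv.fderiv_right (m := (⊤ : ℕ∞)) (by simp)).differentiable (by simp)) p
  have hsym : IsSymmSndFDerivAt ℝ v p :=
    (hv.contDiffAt).isSymmSndFDerivAt (by rw [minSmoothness_of_isRCLikeNormedField]; exact WithTop.coe_le_coe.mpr le_top)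
  have key : ∀ δ : Fin 4, fderiv ℝ (pd δ v) p =
      (fderiv ℝ (fderiv ℝ v) p).flip (Pi.single δ 1) := by
    intro δ
    have : pd δ v = fun q => (fderiv ℝ v q) (Pi.single δ 1) := rfl
    rw [this, fderiv_clm_apply hd (differentiableAt_const _)]
    simp
  simp only [pd, key]
  exact hsym _ _

/-! ### terms -/

structure Trm where
  P : (Fin 4 → ℝ) → ℝ
  m : ℕ
  k : ℕ
  M : List (Fin 4)
  Jl : List (Fin 3)

def coefT (T : Trm) : (Fin 4 → ℝ) → ℝ :=
  fun p => T.P p * st p / (p 0 ^ T.m * s2 p ^ T.k)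

def valT (T : Trm) (u : (Fin 4 → ℝ) → ℝ) : (Fin 4 → ℝ) → ℝ :=
  fun p => coefT T p * pdI T.M (LJ T.Jl u) p

def OKc (T : Trm) : Prop := ∃ d, Pl d T.P ∧ d + 1 ≤ T.m + T.k

lemma coefT_diffAt {T : Trm} (hP : ContDiff ℝ (⊤ : ℕ∞) T.P) {p} (hp : p ∈ Vset) :
    DifferentiableAt ℝ (coefT T) p := by
  obtain ⟨Φ, h, _⟩ := coef_hasF T.P hP T.m T.k hp
  exact h.differentiableAt

lemma valT_diffAt {T : Trm} (hP : ContDiff ℝ (⊤ : ℕ∞) T.P) {u} (hu : ContDiff ℝ (⊤ : ℕ∞) u) {p}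
    (hp : p ∈ Vset) : DifferentiableAt ℝ (valT T u) p :=
  (coefT_diffAt hP hp).mul
    (((contDiff_pdI (contDiff_LJ hu T.Jl) T.M).differentiable (by simp)) p)

lemma pd_coefT (T : Trm) (hP : ContDiff ℝ (⊤ : ℕ∞) T.P) (γ : Fin 4) {p} (hp : p ∈ Vset) :
    pd γ (coefT T) p =
        pd γ T.P p * st p / (p 0 ^ T.m * s2 p ^ T.k)
        + (T.P p * (ds2f γ p * (1/2))) * st p / (p 0 ^ T.m * s2 p ^ (T.k+1))
        + ((-(T.m:ℝ) * (Pi.single γ 1 : Fin 4 → ℝ) 0) * T.P p) * st p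
            / (p 0 ^ (T.m+1) * s2 p ^ T.k)
        + ((-(T.k:ℝ)) * ds2f γ p * T.P p) * st p / (p 0 ^ T.m * s2 p ^ (T.k+1)) := by
  obtain ⟨Φ, h, he⟩ := coef_hasF T.P hP T.m T.k hp
  have : pd γ (coefT T) p = Φ (Pi.single γ 1) := by
    rw [pd, show coefT T = (fun q => T.P q * st q / (q 0 ^ T.m * s2 q ^ T.k)) from rfl,
      h.fderiv]
  rw [this, he γ]

/-! ### sums of terms -/

def sumV (L : List Trm) (u : (Fin 4 → ℝ) → ℝ) (p : Fin 4 → ℝ) : ℝ :=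
  (L.map (fun T => valT T u p)).sum

lemma list_sum_map_add {α} (l : List α) (f g : α → ℝ) :
    (l.map (fun x => f x + g x)).sum = (l.map f).sum + (l.map g).sum := by
  induction l with
  | nil => simp
  | cons x l ih => simp [ih]; ring

lemma list_sum_map_mul {α} (l : List α) (c : ℝ) (f : α → ℝ) :
    (l.map (fun x => c * f x)).sum = c * (l.map f).sum := by
  induction l with
  | nil => simp
  | cons x l ih => simp [ih]; ring

lemma sumV_diffAt {L : List Trm} (hL : ∀ T ∈ L, ContDiff ℝ (⊤ : ℕ∞) T.P) {u}
    (hu : ContDiff ℝ (⊤ : ℕ∞) u) {p} (hp : p ∈ Vset) :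
    DifferentiableAt ℝ (fun q => sumV L u q) p := by
  induction L with
  | nil => exact differentiableAt_const 0
  | cons T L ih =>
      have h1 : (fun q => sumV (T :: L) u q)
          = fun q => valT T u q + sumV L u q := rfl
      rw [h1]
      exact (valT_diffAt (hL T (by simp)) hu hp).add (ih (fun T' hT' => hL T' (by simp [hT'])))

lemma pd_sumV (γ : Fin 4) {L : List Trm} (hL : ∀ T ∈ L, ContDiff ℝ (⊤ : ℕ∞) T.P) {u}
    (hu : ContDiff ℝ (⊤ : ℕ∞) u) {p} (hp : p ∈ Vset) :
    pd γ (fun q => sumV L u q) p = (L.map (fun T => pd γ (valT T u) p)).sum := by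
  induction L with
  | nil =>
      have : (fun q : Fin 4 → ℝ => sumV [] u q) = fun _ => (0:ℝ) := rfl
      rw [this]; simp [pd_const]
  | cons T L ih =>
      have h1 : (fun q => sumV (T :: L) u q)
          = fun q => valT T u q + (fun q' => sumV L u q') q := rfl
      rw [h1, pd_add γ (valT_diffAt (hL T (by simp)) hu hp)
        (sumV_diffAt (fun T' hT' => hL T' (by simp [hT'])) hu hp),
        ih (fun T' hT' => hL T' (by simp [hT']))]
      simp

/-- commutator of Lb with pd -/
lemma lb_pd_comm {v : (Fin 4 → ℝ) → ℝ} (hv : ContDiff ℝ (⊤ : ℕ∞) v) (a : Fin 3) (β : Fin 4)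
    (p : Fin 4 → ℝ) :
    Lb a (pd β v) p = pd β (Lb a v) p
      - (Pi.single β 1 : Fin 4 → ℝ) a.succ * pd 0 v p
      - (Pi.single β 1 : Fin 4 → ℝ) 0 * pd a.succ v p := by
  have hd : ∀ δ : Fin 4, DifferentiableAt ℝ (pd δ v) p :=
    fun δ => ((contDiff_pd hv δ).differentiable (by simp)) p
  have hproj : ∀ i : Fin 4, DifferentiableAt ℝ (fun q : Fin 4 → ℝ => q i) p :=
    fun i => ((contDiff_proj i).differentiable (by simp)) p
  have h1 : pd β (Lb a v) p
      = (p a.succ * pd β (pd 0 v) p + pd 0 v p * (Pi.single β 1 : Fin 4 → ℝ) a.succ)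
        + (p 0 * pd β (pd a.succ v) p + pd a.succ v p * (Pi.single β 1 : Fin 4 → ℝ) 0) := by
    have e : Lb a v = fun q => (fun q' : Fin 4 → ℝ => q' a.succ * pd 0 v q') q
        + (fun q' : Fin 4 → ℝ => q' 0 * pd a.succ v q') q := rfl
    rw [e, pd_add β ((hproj a.succ).fun_mul (hd 0)) ((hproj 0).fun_mul (hd a.succ)),
      pd_mul β (hproj a.succ) (hd 0), pd_mul β (hproj 0) (hd a.succ), pd_proj, pd_proj]
  have h2 : Lb a (pd β v) p
      = p a.succ * pd 0 (pd β v) p + p 0 * pd a.succ (pd β v) p := rfl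
  rw [h2, h1, pd_comm hv β 0 p, pd_comm hv β a.succ p]
  ring

lemma ds2f_zero (p : Fin 4 → ℝ) : ds2f 0 p = 2 * p 0 := by
  have h : ∀ a : Fin 3, (Pi.single (0:Fin 4) 1 : Fin 4 → ℝ) a.succ = 0 := by
    intro a
    rw [Pi.single_apply]
    simp [Fin.succ_ne_zero]
  simp [ds2f, h]

lemma ds2f_succ (a : Fin 3) (p : Fin 4 → ℝ) : ds2f a.succ p = -(2 * p a.succ) := by
  have h0 : (Pi.single a.succ (1:ℝ) : Fin 4 → ℝ) 0 = 0 := by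
    rw [Pi.single_apply]
    simp [(Fin.succ_ne_zero a).symm]
  have hsum : (∑ b : Fin 3, 2 * p b.succ * (Pi.single a.succ 1 : Fin 4 → ℝ) b.succ)
      = 2 * p a.succ := by
    rw [Finset.sum_eq_single a]
    · simp
    · intro b _ hb
      rw [Pi.single_apply]
      have : b.succ ≠ a.succ := fun h => hb (Fin.succ_injective _ h)
      simp [this]
    · simp
  simp [ds2f, h0, hsum]

lemma lb_coefT (T : Trm) (hP : ContDiff ℝ (⊤ : ℕ∞) T.P) (a : Fin 3) {p} (hp : p ∈ Vset) :
    Lb a (coefT T) p = Lb a T.P p * st p / (p 0 ^ T.m * s2 p ^ T.k)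
      + ((-(T.m:ℝ) * p a.succ) * T.P p) * st p / (p 0 ^ (T.m+1) * s2 p ^ T.k) := by
  have h2 : Lb a (coefT T) p
      = p a.succ * pd 0 (coefT T) p + p 0 * pd a.succ (coefT T) p := rfl
  have h3 : Lb a T.P p = p a.succ * pd 0 T.P p + p 0 * pd a.succ T.P p := rfl
  rw [h2, h3, pd_coefT T hP 0 hp, pd_coefT T hP a.succ hp, ds2f_zero, ds2f_succ]
  have e1 : (Pi.single (0:Fin 4) 1 : Fin 4 → ℝ) 0 = 1 := by simp
  have e2 : (Pi.single a.succ (1:ℝ) : Fin 4 → ℝ) 0 = 0 := by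
    rw [Pi.single_apply]; simp [(Fin.succ_ne_zero a).symm]
  rw [e1, e2]
  have hT : p 0 ≠ 0 := ne_of_gt hp.1
  have hQ : s2 p ≠ 0 := ne_of_gt hp.2
  field_simp
  ring

lemma termPd (γ : Fin 4) (T : Trm) (hOK : OKc T) :
    ∃ L' : List Trm, (∀ T' ∈ L', OKc T' ∧ (T'.M = T.M ∨ T'.M = γ :: T.M) ∧ T'.Jl = T.Jl) ∧
      ∀ u, ContDiff ℝ (⊤ : ℕ∞) u → ∀ p ∈ Vset, pd γ (valT T u) p = sumV L' u p := by
  obtain ⟨d, hPl, hdk⟩ := hOK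
  refine ⟨[⟨pd γ T.P, T.m, T.k, T.M, T.Jl⟩,
          ⟨fun p => T.P p * (ds2f γ p * (1/2)), T.m, T.k+1, T.M, T.Jl⟩,
          ⟨fun p => (-(T.m:ℝ) * (Pi.single γ 1 : Fin 4 → ℝ) 0) * T.P p, T.m+1, T.k, T.M, T.Jl⟩,
          ⟨fun p => (-(T.k:ℝ)) * ds2f γ p * T.P p, T.m, T.k+1, T.M, T.Jl⟩,
          ⟨T.P, T.m, T.k, γ :: T.M, T.Jl⟩], ?_, ?_⟩
  · intro T' hT'
    simp only [List.mem_cons, List.not_mem_nil, or_false] at hT'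
    rcases hT' with rfl | rfl | rfl | rfl | rfl
    · exact ⟨⟨d, hPl.deriv γ, by dsimp only; omega⟩, Or.inl rfl, rfl⟩
    · exact ⟨⟨d + 1, hPl.mul ((Pl_ds2f γ).mul (Pl.const (1/2))), by dsimp only; omega⟩,
        Or.inl rfl, rfl⟩
    · exact ⟨⟨0 + d, (Pl.const (-(T.m:ℝ) * (Pi.single γ 1 : Fin 4 → ℝ) 0)).mul hPl,
        by dsimp only; omega⟩, Or.inl rfl, rfl⟩
    · exact ⟨⟨0 + 1 + d, ((Pl.const (-(T.k:ℝ))).mul (Pl_ds2f γ)).mul hPl,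
        by dsimp only; omega⟩, Or.inl rfl, rfl⟩
    · exact ⟨⟨d, hPl, hdk⟩, Or.inr rfl, rfl⟩
  · intro u hu p hp
    have hsm : DifferentiableAt ℝ (pdI T.M (LJ T.Jl u)) p :=
      ((contDiff_pdI (contDiff_LJ hu T.Jl) T.M).differentiable (by simp)) p
    have h1 : valT T u = fun q => coefT T q * pdI T.M (LJ T.Jl u) q := rfl
    rw [h1, pd_mul γ (coefT_diffAt hPl.contDiff hp) hsm, pd_coefT T hPl.contDiff γ hp]
    have h2 : pd γ (pdI T.M (LJ T.Jl u)) p = pdI (γ :: T.M) (LJ T.Jl u) p := rfl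
    rw [h2]
    simp only [sumV, List.map_cons, List.map_nil, List.sum_cons, List.sum_nil, valT, coefT]
    ring

lemma termLb (a : Fin 3) (T : Trm) (hOK : OKc T) (β : Fin 4) (hM : T.M = [β]) :
    ∃ L' : List Trm, (∀ T' ∈ L', OKc T' ∧ (∃ β', T'.M = [β']) ∧
        (T'.Jl = T.Jl ∨ T'.Jl = a :: T.Jl)) ∧
      ∀ u, ContDiff ℝ (⊤ : ℕ∞) u → ∀ p ∈ Vset, Lb a (valT T u) p = sumV L' u p := by
  obtain ⟨P, m, k, M, Jl⟩ := T
  simp only at hM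
  subst hM
  obtain ⟨d, hPl, hdk⟩ := hOK
  simp only at hPl hdk ⊢
  refine ⟨[⟨P, m, k, [β], a :: Jl⟩,
          ⟨fun p => (-((Pi.single β 1 : Fin 4 → ℝ) a.succ)) * P p, m, k, [0], Jl⟩,
          ⟨fun p => (-((Pi.single β 1 : Fin 4 → ℝ) 0)) * P p, m, k, [a.succ], Jl⟩,
          ⟨Lb a P, m, k, [β], Jl⟩,
          ⟨fun p => (-(m:ℝ) * p a.succ) * P p, m+1, k, [β], Jl⟩], ?_, ?_⟩
  · intro T' hT'
    simp only [List.mem_cons, List.not_mem_nil, or_false] at hT'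
    rcases hT' with rfl | rfl | rfl | rfl | rfl
    · exact ⟨⟨d, hPl, hdk⟩, ⟨β, rfl⟩, Or.inr rfl⟩
    · exact ⟨⟨0 + d, (Pl.const (-((Pi.single β 1 : Fin 4 → ℝ) a.succ))).mul hPl,
        by dsimp only; omega⟩, ⟨0, rfl⟩, Or.inl rfl⟩
    · exact ⟨⟨0 + d, (Pl.const (-((Pi.single β 1 : Fin 4 → ℝ) 0))).mul hPl,
        by dsimp only; omega⟩, ⟨a.succ, rfl⟩, Or.inl rfl⟩
    · exact ⟨⟨d, hPl.lb a, hdk⟩, ⟨β, rfl⟩, Or.inl rfl⟩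
    · exact ⟨⟨0 + 1 + d, ((Pl.const (-(m:ℝ))).mul (Pl.coord a.succ)).mul hPl,
        by dsimp only; omega⟩, ⟨β, rfl⟩, Or.inl rfl⟩
  · intro u hu p hp
    set T : Trm := ⟨P, m, k, [β], Jl⟩ with hT
    have hw : ContDiff ℝ (⊤ : ℕ∞) (LJ Jl u) := contDiff_LJ hu Jl
    have hsm : DifferentiableAt ℝ (pd β (LJ Jl u)) p :=
      ((contDiff_pd hw β).differentiable (by simp)) p
    have hcd : DifferentiableAt ℝ (coefT T) p := coefT_diffAt hPl.contDiff hp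
    have hval : valT T u = fun q => coefT T q * pd β (LJ Jl u) q := rfl
    have hLb : Lb a (valT T u) p
        = p a.succ * pd 0 (valT T u) p + p 0 * pd a.succ (valT T u) p := rfl
    rw [hLb, hval, pd_mul 0 hcd hsm, pd_mul a.succ hcd hsm]
    have hkey : p a.succ * pd 0 (pd β (LJ Jl u)) p + p 0 * pd a.succ (pd β (LJ Jl u)) p
        = Lb a (pd β (LJ Jl u)) p := rfl
    have hkey2 : p a.succ * pd 0 (coefT T) p + p 0 * pd a.succ (coefT T) p
        = Lb a (coefT T) p := rfl
    have hcomm := lb_pd_comm hw a β p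
    have hlbc := lb_coefT T hPl.contDiff a hp
    have hLJ : Lb a (LJ Jl u) = LJ (a :: Jl) u := rfl
    rw [hLJ] at hcomm
    calc p a.succ * (coefT T p * pd 0 (pd β (LJ Jl u)) p + pd β (LJ Jl u) p * pd 0 (coefT T) p)
          + p 0 * (coefT T p * pd a.succ (pd β (LJ Jl u)) p
              + pd β (LJ Jl u) p * pd a.succ (coefT T) p)
        = coefT T p * Lb a (pd β (LJ Jl u)) p + pd β (LJ Jl u) p * Lb a (coefT T) p := by
          rw [← hkey, ← hkey2]; ring
      _ = sumV _ u p := by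
          rw [hcomm, hlbc]
          simp only [sumV, List.map_cons, List.map_nil, List.sum_cons, List.sum_nil,
            valT, coefT, show ∀ (δ : Fin 4) (w : (Fin 4 → ℝ) → ℝ), pdI [δ] w = pd δ w
              from fun _ _ => rfl]
          ring

lemma sum_expand {Q : Trm → Prop} (G : Trm → ((Fin 4 → ℝ) → ℝ) → (Fin 4 → ℝ) → ℝ)
    (L : List Trm)
    (h : ∀ T ∈ L, ∃ L', (∀ T' ∈ L', Q T') ∧
        ∀ u, ContDiff ℝ (⊤ : ℕ∞) u → ∀ p ∈ Vset, G T u p = sumV L' u p) :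
    ∃ L'', (∀ T' ∈ L'', Q T') ∧ ∀ u, ContDiff ℝ (⊤ : ℕ∞) u → ∀ p ∈ Vset,
      (L.map (fun T => G T u p)).sum = sumV L'' u p := by
  induction L with
  | nil => exact ⟨[], by simp, by intro u _ p _; simp [sumV]⟩
  | cons T L ih =>
      obtain ⟨L1, hQ1, hE1⟩ := h T (by simp)
      obtain ⟨L2, hQ2, hE2⟩ := ih (fun T' hT' => h T' (by simp [hT']))
      refine ⟨L1 ++ L2, ?_, ?_⟩
      · intro T' hT'
        rcases List.mem_append.1 hT' with h' | h'
        · exact hQ1 T' h'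
        · exact hQ2 T' h'
      · intro u hu p hp
        simp only [List.map_cons, List.sum_cons, hE1 u hu p hp, hE2 u hu p hp, sumV,
          List.map_append, List.sum_append]

lemma expandJ (α : Fin 4) (J : List (Fin 3)) :
    ∃ L : List Trm, (∀ T ∈ L, OKc T ∧ (∃ β, T.M = [β]) ∧ T.Jl.length ≤ J.length) ∧
      ∀ u, ContDiff ℝ (⊤ : ℕ∞) u → ∀ p ∈ Vset,
        LJ J (fun q => st q / q 0 * pd α u q) p = sumV L u p := by
  induction J with
  | nil =>
      refine ⟨[⟨fun _ => (1:ℝ), 1, 0, [α], []⟩], ?_, ?_⟩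
      · intro T hT
        simp only [List.mem_singleton] at hT
        subst hT
        exact ⟨⟨0, Pl.const 1, by dsimp only; omega⟩, ⟨α, rfl⟩, by simp⟩
      · intro u hu p hp
        have h1 : LJ [] (fun q => st q / q 0 * pd α u q) p = st p / p 0 * pd α u p := rfl
        have h2 : pdI [α] (LJ [] u) p = pd α u p := rfl
        simp only [sumV, List.map_cons, List.map_nil, List.sum_cons, List.sum_nil,
          valT, coefT, h1, h2]
        ring
  | cons a J ih =>
      obtain ⟨L, hQ, hE⟩ := ih
      have hcd : ∀ T ∈ L, ContDiff ℝ (⊤ : ℕ∞) T.P := by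
        intro T hT
        obtain ⟨⟨d, hPl, _⟩, _, _⟩ := hQ T hT
        exact hPl.contDiff
      have hper : ∀ T ∈ L, ∃ L', (∀ T' ∈ L', OKc T' ∧ (∃ β, T'.M = [β]) ∧
          T'.Jl.length ≤ J.length + 1) ∧
          ∀ u, ContDiff ℝ (⊤ : ℕ∞) u → ∀ p ∈ Vset, Lb a (valT T u) p = sumV L' u p := by
        intro T hT
        obtain ⟨hOK, ⟨β, hM⟩, hlen⟩ := hQ T hT
        obtain ⟨L', hQ', hE'⟩ := termLb a T hOK β hM
        refine ⟨L', fun T' hT' => ⟨(hQ' T' hT').1, (hQ' T' hT').2.1, ?_⟩, hE'⟩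
        rcases (hQ' T' hT').2.2 with h' | h'
        · rw [h']; omega
        · rw [h', List.length_cons]; omega
      obtain ⟨L'', hQ'', hE''⟩ := sum_expand (fun T u p => Lb a (valT T u) p) L hper
      refine ⟨L'', fun T' hT' => by
        obtain ⟨h1, h2, h3⟩ := hQ'' T' hT'
        exact ⟨h1, h2, by simp only [List.length_cons]; exact h3⟩, ?_⟩
      intro u hu p hp
      have hev : (LJ J (fun q => st q / q 0 * pd α u q))
          =ᶠ[nhds p] (fun q => sumV L u q) :=
        Filter.eventuallyEq_of_mem (isOpen_Vset.mem_nhds hp) (fun q hq => hE u hu q hq)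
      have hpd : ∀ γ : Fin 4, pd γ (LJ J (fun q => st q / q 0 * pd α u q)) p
          = (L.map (fun T => pd γ (valT T u) p)).sum := by
        intro γ
        have h1 : pd γ (LJ J (fun q => st q / q 0 * pd α u q)) p
            = pd γ (fun q => sumV L u q) p :=
          congrArg (fun Φ : (Fin 4 → ℝ) →L[ℝ] ℝ => Φ (Pi.single γ 1)) hev.fderiv_eq
        rw [h1, pd_sumV γ hcd hu hp]
      have h2 : LJ (a :: J) (fun q => st q / q 0 * pd α u q) p
          = p a.succ * pd 0 (LJ J (fun q => st q / q 0 * pd α u q)) p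
            + p 0 * pd a.succ (LJ J (fun q => st q / q 0 * pd α u q)) p := rfl
      rw [h2, hpd 0, hpd a.succ, ← list_sum_map_mul L (p a.succ), ← list_sum_map_mul L (p 0),
        ← list_sum_map_add]
      exact hE'' u hu p hp

lemma expandI (I : List (Fin 4)) (J : List (Fin 3)) (α : Fin 4) :
    ∃ L : List Trm, (∀ T ∈ L, OKc T ∧ T.M ≠ [] ∧ T.M.length ≤ I.length + 1 ∧
        T.Jl.length ≤ J.length) ∧
      ∀ u, ContDiff ℝ (⊤ : ℕ∞) u → ∀ p ∈ Vset,
        pdI I (LJ J (fun q => st q / q 0 * pd α u q)) p = sumV L u p := by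
  induction I with
  | nil =>
      obtain ⟨L, hQ, hE⟩ := expandJ α J
      refine ⟨L, ?_, hE⟩
      intro T hT
      obtain ⟨hOK, ⟨β, hM⟩, hlen⟩ := hQ T hT
      exact ⟨hOK, by rw [hM]; simp, by rw [hM]; simp, hlen⟩
  | cons γ I ih =>
      obtain ⟨L, hQ, hE⟩ := ih
      have hcd : ∀ T ∈ L, ContDiff ℝ (⊤ : ℕ∞) T.P := by
        intro T hT
        obtain ⟨⟨d, hPl, _⟩, _, _⟩ := hQ T hT
        exact hPl.contDiff
      have hper : ∀ T ∈ L, ∃ L', (∀ T' ∈ L', OKc T' ∧ T'.M ≠ [] ∧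
          T'.M.length ≤ I.length + 2 ∧ T'.Jl.length ≤ J.length) ∧
          ∀ u, ContDiff ℝ (⊤ : ℕ∞) u → ∀ p ∈ Vset, pd γ (valT T u) p = sumV L' u p := by
        intro T hT
        obtain ⟨hOK, hne, hlen, hJlen⟩ := hQ T hT
        obtain ⟨L', hQ', hE'⟩ := termPd γ T hOK
        refine ⟨L', fun T' hT' => ⟨(hQ' T' hT').1, ?_, ?_, by rw [(hQ' T' hT').2.2]; exact hJlen⟩, hE'⟩
        · rcases (hQ' T' hT').2.1 with h' | h' <;> rw [h'] <;> simp [hne]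
        · rcases (hQ' T' hT').2.1 with h' | h'
          · rw [h']; omega
          · rw [h', List.length_cons]; omega
      obtain ⟨L'', hQ'', hE''⟩ := sum_expand (fun T u p => pd γ (valT T u) p) L hper
      refine ⟨L'', fun T' hT' => by
        obtain ⟨h1, h2, h3, h4⟩ := hQ'' T' hT'
        exact ⟨h1, h2, by simp only [List.length_cons]; omega, h4⟩, ?_⟩
      intro u hu p hp
      have hev : (pdI I (LJ J (fun q => st q / q 0 * pd α u q)))
          =ᶠ[nhds p] (fun q => sumV L u q) :=
        Filter.eventuallyEq_of_mem (isOpen_Vset.mem_nhds hp) (fun q hq => hE u hu q hq)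
      have h1 : pdI (γ :: I) (LJ J (fun q => st q / q 0 * pd α u q)) p
          = pd γ (pdI I (LJ J (fun q => st q / q 0 * pd α u q))) p := rfl
      have h2 : pd γ (pdI I (LJ J (fun q => st q / q 0 * pd α u q))) p
          = pd γ (fun q => sumV L u q) p :=
        congrArg (fun Φ : (Fin 4 → ℝ) →L[ℝ] ℝ => Φ (Pi.single γ 1)) hev.fderiv_eq
      rw [h1, h2, pd_sumV γ hcd hu hp]
      exact hE'' u hu p hp

/-! ### bounds -/

lemma coefT_bound {T : Trm} (hOK : OKc T) :
    ∃ C > 0, ∀ p ∈ Kset, |coefT T p| ≤ C * (st p / p 0) := by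
  obtain ⟨d, hPl, hdk⟩ := hOK
  obtain ⟨C, hC, hb⟩ := hPl.bound
  refine ⟨C, hC, fun p hp => ?_⟩
  have hpV := Kset_sub_Vset hp
  have ht : 1 < p 0 := (Kset_facts hp).1
  have hs2 : p 0 ≤ s2 p := Kset_s2 hp
  have hs2pos : 0 < s2 p := hpV.2
  have hstpos : 0 < st p := Vset_st_pos hpV
  have hDpos : 0 < p 0 ^ T.m * s2 p ^ T.k := by positivity
  have h1 : p 0 ^ (d + 1) ≤ p 0 ^ T.m * s2 p ^ T.k := by
    calc p 0 ^ (d + 1) ≤ p 0 ^ (T.m + T.k) := pow_le_pow_right₀ (by linarith) hdk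
      _ = p 0 ^ T.m * p 0 ^ T.k := pow_add _ _ _
      _ ≤ p 0 ^ T.m * s2 p ^ T.k := by
          have := pow_le_pow_left₀ (by linarith : (0:ℝ) ≤ p 0) hs2 T.k
          have h2 : (0:ℝ) ≤ p 0 ^ T.m := by positivity
          nlinarith
  have hPb := hb p hp d (le_refl d)
  have key : |T.P p| * p 0 ≤ C * (p 0 ^ T.m * s2 p ^ T.k) := by
    calc |T.P p| * p 0 ≤ (C * p 0 ^ d) * p 0 :=
          mul_le_mul_of_nonneg_right hPb (by linarith)
      _ = C * p 0 ^ (d + 1) := by rw [pow_succ]; ring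
      _ ≤ C * (p 0 ^ T.m * s2 p ^ T.k) := mul_le_mul_of_nonneg_left h1 (le_of_lt hC)
  have habs : |coefT T p| = |T.P p| * st p / (p 0 ^ T.m * s2 p ^ T.k) := by
    rw [coefT, abs_div, abs_mul, abs_of_pos hstpos, abs_of_pos hDpos]
  rw [habs, div_le_iff₀ hDpos]
  have hfin : C * (st p / p 0) * (p 0 ^ T.m * s2 p ^ T.k)
      = (C * (p 0 ^ T.m * s2 p ^ T.k)) * st p / p 0 := by ring
  rw [hfin, le_div_iff₀ (by linarith : (0:ℝ) < p 0)]
  calc |T.P p| * st p * p 0 = (|T.P p| * p 0) * st p := by ring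
    _ ≤ (C * (p 0 ^ T.m * s2 p ^ T.k)) * st p :=
        mul_le_mul_of_nonneg_right key (le_of_lt hstpos)

def Sexpr (I : List (Fin 4)) (J : List (Fin 3)) (u : (Fin 4 → ℝ) → ℝ) (p : Fin 4 → ℝ) : ℝ :=
  ∑ k₁ ∈ Finset.range (I.length + 1), ∑ I' : Fin k₁ → Fin 4,
    ∑ k₂ ∈ Finset.range (J.length + 1), ∑ J' : Fin k₂ → Fin 3,
      ∑ β : Fin 4,
        |(st p / p 0) * pd β (pdI (List.ofFn I') (LJ (List.ofFn J') u)) p|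

lemma Sexpr_nonneg (I : List (Fin 4)) (J : List (Fin 3)) (u) (p) : 0 ≤ Sexpr I J u p := by
  refine Finset.sum_nonneg fun _ _ => Finset.sum_nonneg fun _ _ =>
    Finset.sum_nonneg fun _ _ => Finset.sum_nonneg fun _ _ =>
      Finset.sum_nonneg fun _ _ => abs_nonneg _

lemma summand_le_Sexpr (I : List (Fin 4)) (J : List (Fin 3)) (u) (p) (β : Fin 4)
    (I'' : List (Fin 4)) (J'' : List (Fin 3)) (hI : I''.length ≤ I.length)
    (hJ : J''.length ≤ J.length) :
    |(st p / p 0) * pd β (pdI I'' (LJ J'' u)) p| ≤ Sexpr I J u p := by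
  have e1 : List.ofFn (I''.get) = I'' := List.ofFn_get I''
  have e2 : List.ofFn (J''.get) = J'' := List.ofFn_get J''
  have h5 : |(st p / p 0) * pd β (pdI I'' (LJ J'' u)) p|
      ≤ ∑ β' : Fin 4, |(st p / p 0) * pd β' (pdI I'' (LJ J'' u)) p| :=
    Finset.single_le_sum (f := fun β' : Fin 4 => |(st p / p 0) * pd β' (pdI I'' (LJ J'' u)) p|)
      (fun _ _ => abs_nonneg _) (Finset.mem_univ β)
  have h4 : (∑ β' : Fin 4, |(st p / p 0) * pd β' (pdI I'' (LJ J'' u)) p|)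
      ≤ ∑ J' : Fin J''.length → Fin 3, ∑ β' : Fin 4,
          |(st p / p 0) * pd β' (pdI I'' (LJ (List.ofFn J') u)) p| := by
    have := Finset.single_le_sum
      (f := fun J' : Fin J''.length → Fin 3 => ∑ β' : Fin 4,
        |(st p / p 0) * pd β' (pdI I'' (LJ (List.ofFn J') u)) p|)
      (fun _ _ => Finset.sum_nonneg fun _ _ => abs_nonneg _) (Finset.mem_univ (J''.get))
    simpa [e2] using this
  have h3 : (∑ J' : Fin J''.length → Fin 3, ∑ β' : Fin 4,
        |(st p / p 0) * pd β' (pdI I'' (LJ (List.ofFn J') u)) p|)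
      ≤ ∑ k₂ ∈ Finset.range (J.length + 1), ∑ J' : Fin k₂ → Fin 3, ∑ β' : Fin 4,
          |(st p / p 0) * pd β' (pdI I'' (LJ (List.ofFn J') u)) p| :=
    Finset.single_le_sum
      (f := fun k₂ => ∑ J' : Fin k₂ → Fin 3, ∑ β' : Fin 4,
        |(st p / p 0) * pd β' (pdI I'' (LJ (List.ofFn J') u)) p|)
      (fun _ _ => Finset.sum_nonneg fun _ _ => Finset.sum_nonneg fun _ _ => abs_nonneg _)
      (Finset.mem_range.mpr (by omega))
  have h2 : (∑ k₂ ∈ Finset.range (J.length + 1), ∑ J' : Fin k₂ → Fin 3, ∑ β' : Fin 4,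
        |(st p / p 0) * pd β' (pdI I'' (LJ (List.ofFn J') u)) p|)
      ≤ ∑ I' : Fin I''.length → Fin 4, ∑ k₂ ∈ Finset.range (J.length + 1),
          ∑ J' : Fin k₂ → Fin 3, ∑ β' : Fin 4,
            |(st p / p 0) * pd β' (pdI (List.ofFn I') (LJ (List.ofFn J') u)) p| := by
    have := Finset.single_le_sum
      (f := fun I' : Fin I''.length → Fin 4 => ∑ k₂ ∈ Finset.range (J.length + 1),
        ∑ J' : Fin k₂ → Fin 3, ∑ β' : Fin 4,
          |(st p / p 0) * pd β' (pdI (List.ofFn I') (LJ (List.ofFn J') u)) p|)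
      (fun _ _ => Finset.sum_nonneg fun _ _ => Finset.sum_nonneg fun _ _ =>
        Finset.sum_nonneg fun _ _ => abs_nonneg _) (Finset.mem_univ (I''.get))
    simpa [e1] using this
  have h1 : (∑ I' : Fin I''.length → Fin 4, ∑ k₂ ∈ Finset.range (J.length + 1),
        ∑ J' : Fin k₂ → Fin 3, ∑ β' : Fin 4,
          |(st p / p 0) * pd β' (pdI (List.ofFn I') (LJ (List.ofFn J') u)) p|)
      ≤ Sexpr I J u p :=
    Finset.single_le_sum
      (f := fun k₁ => ∑ I' : Fin k₁ → Fin 4, ∑ k₂ ∈ Finset.range (J.length + 1),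
        ∑ J' : Fin k₂ → Fin 3, ∑ β' : Fin 4,
          |(st p / p 0) * pd β' (pdI (List.ofFn I') (LJ (List.ofFn J') u)) p|)
      (fun _ _ => Finset.sum_nonneg fun _ _ => Finset.sum_nonneg fun _ _ =>
        Finset.sum_nonneg fun _ _ => Finset.sum_nonneg fun _ _ => abs_nonneg _)
      (Finset.mem_range.mpr (by omega))
  exact h5.trans (h4.trans (h3.trans (h2.trans h1)))

lemma valT_le (I : List (Fin 4)) (J : List (Fin 3)) (T : Trm) (hOK : OKc T)
    (hne : T.M ≠ []) (hlenM : T.M.length ≤ I.length + 1) (hlenJ : T.Jl.length ≤ J.length) :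
    ∃ C > 0, ∀ u p, p ∈ Kset → |valT T u p| ≤ C * Sexpr I J u p := by
  obtain ⟨C, hC, hb⟩ := coefT_bound hOK
  refine ⟨C, hC, fun u p hp => ?_⟩
  obtain ⟨β, I'', hM⟩ := List.exists_cons_of_ne_nil hne
  have hpV := Kset_sub_Vset hp
  have hw : 0 ≤ st p / p 0 := by
    have := Vset_st_pos hpV
    have := hpV.1
    positivity
  have hpdI : pdI T.M (LJ T.Jl u) p = pd β (pdI I'' (LJ T.Jl u)) p := by rw [hM]; rfl
  have h1 : |valT T u p| = |coefT T p| * |pdI T.M (LJ T.Jl u) p| := abs_mul _ _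
  have h2 : |coefT T p| * |pdI T.M (LJ T.Jl u) p|
      ≤ (C * (st p / p 0)) * |pdI T.M (LJ T.Jl u) p| :=
    mul_le_mul_of_nonneg_right (hb p hp) (abs_nonneg _)
  have h3 : (C * (st p / p 0)) * |pdI T.M (LJ T.Jl u) p|
      = C * |(st p / p 0) * pd β (pdI I'' (LJ T.Jl u)) p| := by
    rw [hpdI, abs_mul, abs_of_nonneg hw]; ring
  have h4 : |(st p / p 0) * pd β (pdI I'' (LJ T.Jl u)) p| ≤ Sexpr I J u p := by
    apply summand_le_Sexpr I J u p β I'' T.Jl ?_ hlenJ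
    have : T.M.length = I''.length + 1 := by rw [hM]; rfl
    omega
  rw [h1]
  calc |coefT T p| * |pdI T.M (LJ T.Jl u) p|
      ≤ (C * (st p / p 0)) * |pdI T.M (LJ T.Jl u) p| := h2
    _ = C * |(st p / p 0) * pd β (pdI I'' (LJ T.Jl u)) p| := h3
    _ ≤ C * Sexpr I J u p := mul_le_mul_of_nonneg_left h4 (le_of_lt hC)

lemma sumV_le (I : List (Fin 4)) (J : List (Fin 3)) (L : List Trm)
    (h : ∀ T ∈ L, OKc T ∧ T.M ≠ [] ∧ T.M.length ≤ I.length + 1 ∧ T.Jl.length ≤ J.length) :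
    ∃ C > 0, ∀ u p, p ∈ Kset → |sumV L u p| ≤ C * Sexpr I J u p := by
  induction L with
  | nil =>
      refine ⟨1, one_pos, fun u p hp => ?_⟩
      have : sumV [] u p = 0 := rfl
      rw [this, abs_zero, one_mul]
      exact Sexpr_nonneg I J u p
  | cons T L ih =>
      obtain ⟨hOK, hne, hM, hJ⟩ := h T (by simp)
      obtain ⟨C1, hC1, hb1⟩ := valT_le I J T hOK hne hM hJ
      obtain ⟨C2, hC2, hb2⟩ := ih (fun T' hT' => h T' (by simp [hT']))
      refine ⟨C1 + C2, by positivity, fun u p hp => ?_⟩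
      have hs : sumV (T :: L) u p = valT T u p + sumV L u p := rfl
      rw [hs]
      calc |valT T u p + sumV L u p| ≤ |valT T u p| + |sumV L u p| := abs_add_le _ _
        _ ≤ C1 * Sexpr I J u p + C2 * Sexpr I J u p :=
            add_le_add (hb1 u p hp) (hb2 u p hp)
        _ = (C1 + C2) * Sexpr I J u p := by ring

/-- Proposition 4.2: estimate for `∂^I L^J ((s̃/t) ∂_α u)`:
`|∂^I L^J((s/t)∂_α u)| ≤ |(s/t)∂_α ∂^I L^J u| + C Σ_{β,|I'|≤|I|,|J'|≤|J|} |(s/t)∂_β ∂^{I'} L^{J'} u|`. -/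
theorem estimate_sdu_weighted_derivative (I : List (Fin 4)) (J : List (Fin 3)) :
    ∃ C : ℝ, 0 < C ∧
      ∀ u : (Fin 4 → ℝ) → ℝ, ContDiff ℝ (⊤ : ℕ∞) u →
        ∀ (α : Fin 4), ∀ p ∈ Kset,
          |pdI I (LJ J (fun q => (st q / q 0) * pd α u q)) p|
            ≤ |(st p / p 0) * pd α (pdI I (LJ J u)) p|
              + C * ∑ k₁ ∈ Finset.range (I.length + 1), ∑ I' : Fin k₁ → Fin 4,
                  ∑ k₂ ∈ Finset.range (J.length + 1), ∑ J' : Fin k₂ → Fin 3,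
                    ∑ β : Fin 4,
                      |(st p / p 0) * pd β (pdI (List.ofFn I') (LJ (List.ofFn J') u)) p| := by
  have hα : ∀ α : Fin 4, ∃ C > 0, ∀ u, ContDiff ℝ (⊤ : ℕ∞) u → ∀ p ∈ Kset,
      |pdI I (LJ J (fun q => st q / q 0 * pd α u q)) p| ≤ C * Sexpr I J u p := by
    intro α
    obtain ⟨L, hQ, hE⟩ := expandI I J α
    obtain ⟨C, hC, hb⟩ := sumV_le I J L hQ
    refine ⟨C, hC, fun u hu p hp => ?_⟩
    rw [hE u hu p (Kset_sub_Vset hp)]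
    exact hb u p hp
  obtain ⟨C0, hC0, h0⟩ := hα 0
  obtain ⟨C1, hC1, h1⟩ := hα 1
  obtain ⟨C2, hC2, h2⟩ := hα 2
  obtain ⟨C3, hC3, h3⟩ := hα 3
  refine ⟨C0 + C1 + C2 + C3, by positivity, ?_⟩
  intro u hu α p hp
  have hS := Sexpr_nonneg I J u p
  have habs : (0:ℝ) ≤ |(st p / p 0) * pd α (pdI I (LJ J u)) p| := abs_nonneg _
  have key : |pdI I (LJ J (fun q => (st q / q 0) * pd α u q)) p|
      ≤ (C0 + C1 + C2 + C3) * Sexpr I J u p := by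
    fin_cases α
    · exact (h0 u hu p hp).trans (by nlinarith)
    · exact (h1 u hu p hp).trans (by nlinarith)
    · exact (h2 u hu p hp).trans (by nlinarith)
    · exact (h3 u hu p hp).trans (by nlinarith)
  exact key.trans (le_add_of_nonneg_left habs)
end
end
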